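/- arXiv:1003.0513 — 7 statements merged into one kernel-verified Lean document; each statement's English description precedes it below -/
import Mathlib

section
/- Let M be a compact topological space and φ : ℝ → M → M a continuous flow on M. Let Σ_u and Σ_s be compact subsets of M and V_u ⊇ Σ_u, V_s ⊇ Σ_s open sets such that φ t (V_s) ⊆ V_s for all t ≥ 0, and such that for every ρ ∉ Σ_u and every open set U ⊇ Σ_s, φ t ρ ∈ U for all sufficiently large t. Then there exists τ ≥ 0 such that for every ρ ∈ M and all real numbers t₁ ≤ t₂, if φ t₁ ρ ∉ V_u ∪ V_s and φ t₂ ρ ∉ V_u ∪ V_s, then t₂ − t₁ ≤ τ. (In other words, τ is a uniform upper bound for the travel time of any trajectory through the region M \ (V_u ∪ V_s).) -/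
/-!
Every point of the compact set `(Vu ∪ Vs)ᶜ` lies outside `Su`, so its orbit enters the open set
`Vs`. The sets of points entering `Vs` by time `T` are open and increase with `T`, so one of them
covers `(Vu ∪ Vs)ᶜ`: every orbit leaving `Vu ∪ Vs` is back in `Vs` within a uniform time `τ`, and
then stays in `Vs` for good by forward invariance.
-/

open Set Filter

theorem IsCompact.exists_uniform_entrance_time {M : Type*} [TopologicalSpace M]
    {φ : ℝ → M → M} (hφ : ∀ t, Continuous (φ t)) {K W : Set M} (hK : IsCompact K)
    (hW : IsOpen W) (hent : ∀ x ∈ K, ∃ t, φ t x ∈ W) :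
    ∃ τ, 0 ≤ τ ∧ ∀ x ∈ K, ∃ t ≤ τ, φ t x ∈ W := by
  let U : ℝ → Set M := fun T => ⋃ t ≤ T, φ t ⁻¹' W
  have hU_open (T : ℝ) : IsOpen (U T) :=
    isOpen_biUnion fun t _ => hW.preimage (hφ t)
  have hU_mono : Monotone U := fun T T' hTT' =>
    biUnion_mono (fun t (ht : t ≤ T) => ht.trans hTT') fun _ _ => subset_rfl
  have hKU : K ⊆ ⋃ T, U T := fun x hx => by
    obtain ⟨t, ht⟩ := hent x hx
    exact mem_iUnion.2 ⟨t, mem_iUnion₂.2 ⟨t, le_rfl, ht⟩⟩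
  obtain ⟨T, hKT⟩ := hK.elim_directed_cover U hU_open hKU hU_mono.directed_le
  refine ⟨max T 0, le_max_right _ _, fun x hx => ?_⟩
  obtain ⟨t, htT, ht⟩ := mem_iUnion₂.1 (hKT hx)
  exact ⟨t, htT.trans (le_max_left _ _), ht⟩

theorem mem_of_le_of_forward_invariant {M : Type*} {φ : ℝ → M → M}
    (hφadd : ∀ (s t : ℝ) (x : M), φ (s + t) x = φ s (φ t x)) {V : Set M}
    (hinv : ∀ t : ℝ, 0 ≤ t → ∀ x ∈ V, φ t x ∈ V) {x : M} {s t : ℝ} (hst : s ≤ t)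
    (hs : φ s x ∈ V) : φ t x ∈ V := by
  have h := hinv (t - s) (sub_nonneg.2 hst) _ hs
  rwa [← hφadd, sub_add_cancel] at h

theorem stmt_1_general {M : Type*} [TopologicalSpace M] [CompactSpace M]
    (φ : ℝ → M → M)
    (hφadd : ∀ (s t : ℝ) (x : M), φ (s + t) x = φ s (φ t x))
    (hφcont : Continuous fun p : ℝ × M => φ p.1 p.2)
    (Su Ss : Set M)
    (Vu Vs : Set M) (hVu : IsOpen Vu) (hVs : IsOpen Vs)
    (hVuS : Su ⊆ Vu) (hVsS : Ss ⊆ Vs)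
    (hinv : ∀ t : ℝ, 0 ≤ t → ∀ x ∈ Vs, φ t x ∈ Vs)
    (hfwd : ∀ ρ ∉ Su, ∀ U : Set M, IsOpen U → Ss ⊆ U → ∀ᶠ t in atTop, φ t ρ ∈ U) :
    ∃ τ : ℝ, 0 ≤ τ ∧ ∀ (ρ : M) (t₁ t₂ : ℝ), t₁ ≤ t₂ →
      φ t₁ ρ ∉ Vu ∪ Vs → φ t₂ ρ ∉ Vu ∪ Vs → t₂ - t₁ ≤ τ := by
  have hK : IsCompact (Vu ∪ Vs)ᶜ := (hVu.union hVs).isClosed_compl.isCompact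
  have hent : ∀ x ∈ (Vu ∪ Vs)ᶜ, ∃ t, φ t x ∈ Vs := fun x hx =>
    (hfwd x (fun hSu => hx (Or.inl (hVuS hSu))) Vs hVs hVsS).exists
  obtain ⟨τ, hτ0, hτ⟩ := hK.exists_uniform_entrance_time (φ := φ)
    (fun t => hφcont.comp (Continuous.prodMk_right t)) hVs hent
  refine ⟨τ, hτ0, fun ρ t₁ t₂ _ h₁ h₂ => ?_⟩
  by_contra! hgt
  obtain ⟨t, htτ, ht⟩ := hτ _ h₁
  rw [← hφadd] at ht
  exact h₂ (Or.inr (mem_of_le_of_forward_invariant hφadd hinv (by linarith) ht))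

theorem stmt_1 {M : Type*} [TopologicalSpace M] [CompactSpace M]
    (φ : ℝ → M → M) (hφ0 : φ 0 = id)
    (hφadd : ∀ (s t : ℝ) (x : M), φ (s + t) x = φ s (φ t x))
    (hφcont : Continuous fun p : ℝ × M => φ p.1 p.2)
    (Su Ss : Set M) (hSu : IsCompact Su) (hSs : IsCompact Ss)
    (Vu Vs : Set M) (hVu : IsOpen Vu) (hVs : IsOpen Vs)
    (hVuS : Su ⊆ Vu) (hVsS : Ss ⊆ Vs)
    (hinv : ∀ t : ℝ, 0 ≤ t → ∀ x ∈ Vs, φ t x ∈ Vs)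
    (hfwd : ∀ ρ ∉ Su, ∀ U : Set M, IsOpen U → Ss ⊆ U → ∀ᶠ t in atTop, φ t ρ ∈ U) :
    ∃ τ : ℝ, 0 ≤ τ ∧ ∀ (ρ : M) (t₁ t₂ : ℝ), t₁ ≤ t₂ →
      φ t₁ ρ ∉ Vu ∪ Vs → φ t₂ ρ ∉ Vu ∪ Vs → t₂ - t₁ ≤ τ :=
  stmt_1_general φ hφadd hφcont Su Ss Vu Vs hVu hVs hVuS hVsS hinv hfwd
end

section
/- Let g : ℝⁿ → ℝ be a C^∞ function which for large arguments depends only on the direction, i.e. g(c·ξ) = g(ξ) for every ξ ∈ ℝⁿ with ‖ξ‖ ≥ 1 and every c ≥ 1. Then g is a symbol of order 0: for every k ∈ ℕ there exists a constant C > 0 such that ‖D^k g(ξ)‖ ≤ C · (1 + ‖ξ‖)^{−k} for all ξ ∈ ℝⁿ, where D^k g(ξ) denotes the k-th (total) iterated Fréchet derivative of g at ξ. -/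
open Metric Filter

private lemma aux_iteratedFDeriv_congr {E F : Type*} [NormedAddCommGroup E]
    [NormedSpace ℝ E] [NormedAddCommGroup F] [NormedSpace ℝ F]
    {f₁ f : E → F} {x : E} (h : f₁ =ᶠ[nhds x] f) (k : ℕ) :
    iteratedFDeriv ℝ k f₁ x = iteratedFDeriv ℝ k f x := by
  simp only [← iteratedFDerivWithin_univ]
  exact Filter.EventuallyEq.iteratedFDerivWithin_eq (by rwa [nhdsWithin_univ])
    h.eq_of_nhds k

theorem stmt_3 {n : ℕ} (g : EuclideanSpace ℝ (Fin n) → ℝ)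
    (hg : ContDiff ℝ (⊤ : ℕ∞) g)
    (hhom : ∀ ξ : EuclideanSpace ℝ (Fin n), 1 ≤ ‖ξ‖ → ∀ c : ℝ, 1 ≤ c → g (c • ξ) = g ξ) :
    ∀ k : ℕ, ∃ C > 0, ∀ ξ : EuclideanSpace ℝ (Fin n),
      ‖iteratedFDeriv ℝ k g ξ‖ ≤ C * (1 + ‖ξ‖) ^ (-(k : ℝ)) := by
  intro k
  -- M: max of the norm of the k-th derivative on the closed ball of radius 2
  obtain ⟨ξ₀, -, hξ₀'⟩ := (isCompact_closedBall (0 : EuclideanSpace ℝ (Fin n)) 2).exists_isMaxOn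
    ⟨0, by simp⟩ ((hg.continuous_iteratedFDeriv (m := k) (by exact_mod_cast le_top)).norm.continuousOn)
  have hξ₀ : ∀ x ∈ closedBall (0 : EuclideanSpace ℝ (Fin n)) 2, ‖iteratedFDeriv ℝ k g x‖ ≤ ‖iteratedFDeriv ℝ k g ξ₀‖ := hξ₀'
  set M : ℝ := ‖iteratedFDeriv ℝ k g ξ₀‖ with hM
  have hM0 : 0 ≤ M := norm_nonneg _
  refine ⟨(M + 1) * 3 ^ k, by positivity, fun ξ => ?_⟩
  have h1ξ : (0 : ℝ) < 1 + ‖ξ‖ := by positivity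
  rw [Real.rpow_neg h1ξ.le, Real.rpow_natCast, ← div_eq_mul_inv,
    le_div_iff₀ (by positivity)]
  rcases le_or_gt ‖ξ‖ 2 with hle | hlt
  · -- small case
    have h1 : ‖iteratedFDeriv ℝ k g ξ‖ ≤ M :=
      hξ₀ ξ (by simpa [mem_closedBall, dist_eq_norm] using hle)
    have h2 : (1 + ‖ξ‖) ^ k ≤ 3 ^ k :=
      pow_le_pow_left₀ (by positivity) (by linarith) k
    nlinarith [pow_nonneg h1ξ.le k, norm_nonneg (iteratedFDeriv ℝ k g ξ)]
  · -- large case : rescale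
    set c : ℝ := ‖ξ‖ / 2 with hc
    have hc1 : 1 < c := by rw [hc]; linarith
    have hc0 : (0 : ℝ) < c := by linarith
    set L : EuclideanSpace ℝ (Fin n) →L[ℝ] EuclideanSpace ℝ (Fin n) :=
      c⁻¹ • ContinuousLinearMap.id ℝ _ with hL
    -- g agrees with g ∘ L on the open set {x | c < ‖x‖}
    have hopen : IsOpen {x : EuclideanSpace ℝ (Fin n) | c < ‖x‖} :=
      isOpen_lt continuous_const continuous_norm
    have hmem : ξ ∈ {x : EuclideanSpace ℝ (Fin n) | c < ‖x‖} := by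
      simp only [Set.mem_setOf_eq, hc]; linarith
    have heq : g =ᶠ[nhds ξ] (g ∘ L) := by
      filter_upwards [hopen.mem_nhds hmem] with x hx
      have hx' : c < ‖x‖ := hx
      have hnorm : 1 ≤ ‖c⁻¹ • x‖ := by
        rw [norm_smul, norm_inv, Real.norm_of_nonneg hc0.le]
        rw [le_inv_mul_iff₀ hc0, mul_one]
        linarith
      have := hhom (c⁻¹ • x) hnorm c hc1.le
      rw [smul_smul, mul_inv_cancel₀ hc0.ne', one_smul] at this
      simp only [Function.comp_apply, hL, ContinuousLinearMap.smul_apply,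
        ContinuousLinearMap.id_apply]
      exact this
    rw [aux_iteratedFDeriv_congr heq k,
      L.iteratedFDeriv_comp_right hg ξ ((by exact_mod_cast le_top))]
    have hLnorm : ‖L‖ ≤ c⁻¹ :=
      ContinuousLinearMap.opNorm_le_bound _ (by positivity) (fun x => by
        simp [hL, norm_smul, Real.norm_of_nonneg hc0.le])
    have hLξ : ‖L ξ‖ = 2 := by
      simp only [hL, ContinuousLinearMap.smul_apply, ContinuousLinearMap.id_apply,
        norm_smul, norm_inv, Real.norm_of_nonneg hc0.le]
      field_simp [hc]
      rw [hc]; ring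
    have hM2 : ‖iteratedFDeriv ℝ k g (L ξ)‖ ≤ M :=
      hξ₀ (L ξ) (by simp [mem_closedBall, dist_eq_norm, hLξ])
    calc ‖(iteratedFDeriv ℝ k g (L ξ)).compContinuousLinearMap fun _ => L‖ * (1 + ‖ξ‖) ^ k
        ≤ (‖iteratedFDeriv ℝ k g (L ξ)‖ * ∏ _i : Fin k, ‖L‖) * (1 + ‖ξ‖) ^ k := by
          apply mul_le_mul_of_nonneg_right
            ((iteratedFDeriv ℝ k g (L ξ)).norm_compContinuousLinearMap_le _) (by positivity)
      _ ≤ (M * (c⁻¹) ^ k) * (1 + ‖ξ‖) ^ k := by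
          apply mul_le_mul_of_nonneg_right _ (by positivity)
          rw [Finset.prod_const, Finset.card_univ, Fintype.card_fin]
          apply mul_le_mul hM2 (pow_le_pow_left₀ (norm_nonneg _) hLnorm k)
            (by positivity) hM0
      _ = M * ((1 + ‖ξ‖) / c) ^ k := by rw [div_pow]; field_simp; rw [one_div, inv_pow, mul_assoc, inv_mul_cancel₀ (pow_ne_zero _ hc0.ne'), mul_one]
      _ ≤ M * 3 ^ k := by
          apply mul_le_mul_of_nonneg_left _ hM0
          apply pow_le_pow_left₀ (by positivity)
          rw [div_le_iff₀ hc0, hc]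
          linarith
      _ ≤ (M + 1) * 3 ^ k := by
          apply mul_le_mul_of_nonneg_right (by linarith) (by positivity)
end

section
/- Let m : ℝⁿ → ℝ be a C^∞ function with m(c·ξ) = m(ξ) for every ξ with ‖ξ‖ ≥ 1 and every c ≥ 1, and let f : ℝⁿ → ℝ be a C^∞ function which is positively homogeneous of degree 1 for large arguments, i.e. f(c·ξ) = c·f(ξ) for every ξ with ‖ξ‖ ≥ 1 and every c ≥ 1, and which satisfies f(ξ) > 0 for every ξ with ‖ξ‖ ≥ 1. Define the escape function G(ξ) := m(ξ) · log √(1 + f(ξ)²). Then G is a symbol of order +0: for every μ > 0 and every k ∈ ℕ there exists C > 0 such that ‖D^k G(ξ)‖ ≤ C · (1 + ‖ξ‖)^{μ − k} for all ξ ∈ ℝⁿ. -/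
open Real Metric



-- iterated derivatives of shifted log
lemma aux_log_iteratedDeriv (t : ℝ) :
    ∀ i : ℕ, ∀ u : ℝ, 0 < t + u →
      iteratedDeriv (i + 1) (fun v => Real.log (t + v)) u
        = (-1 : ℝ) ^ i * (Nat.factorial i : ℝ) / (t + u) ^ (i + 1) := by
  intro i
  induction i with
  | zero =>
    intro u hu
    rw [iteratedDeriv_one]
    have h1 : HasDerivAt (fun v : ℝ => t + v) 1 u := (hasDerivAt_id u).const_add t
    have h2 := h1.log (ne_of_gt hu)
    simpa using h2.deriv
  | succ i IH =>
    intro u hu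
    rw [iteratedDeriv_succ]
    have hopen : IsOpen {v : ℝ | 0 < t + v} :=
      isOpen_lt continuous_const (continuous_const.add continuous_id)
    have hev : iteratedDeriv (i + 1) (fun v => Real.log (t + v))
        =ᶠ[nhds u] fun v => (-1 : ℝ) ^ i * (Nat.factorial i : ℝ) / (t + v) ^ (i + 1) := by
      filter_upwards [hopen.mem_nhds hu] with v hv using IH v hv
    rw [hev.deriv_eq]
    have hpow : HasDerivAt (fun v : ℝ => (t + v) ^ (i + 1))
        ((i + 1) * (t + u) ^ i) u := by
      have h1 : HasDerivAt (fun v : ℝ => t + v) 1 u := (hasDerivAt_id u).const_add t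
      have := (hasDerivAt_pow (i + 1) (t + u)).comp u h1
      simpa [Function.comp_def] using this
    have hinv := hpow.inv (by positivity)
    have hfinal := hinv.const_mul ((-1 : ℝ) ^ i * (Nat.factorial i : ℝ))
    have : deriv (fun v => (-1:ℝ)^i * (Nat.factorial i : ℝ) * ((t + v) ^ (i+1))⁻¹) u
        = (-1:ℝ)^i * (Nat.factorial i : ℝ) * (-(((i:ℝ) + 1) * (t + u) ^ i) / ((t + u) ^ (i+1)) ^ 2) :=
      hfinal.deriv
    have heq : (fun v => (-1 : ℝ) ^ i * (Nat.factorial i : ℝ) / (t + v) ^ (i + 1))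
        = fun v => (-1:ℝ)^i * (Nat.factorial i : ℝ) * ((t + v) ^ (i+1))⁻¹ := by
      funext v; rw [div_eq_mul_inv]
    rw [heq, this]
    have hne : (t + u) ≠ 0 := ne_of_gt hu
    rw [pow_succ (-1 : ℝ) i, Nat.factorial_succ]
    push_cast
    field_simp
    ring

-- congruence of iterated derivatives for eventually equal functions
lemma aux_itfd_congr {E F : Type*} [NormedAddCommGroup E] [NormedSpace ℝ E]
    [NormedAddCommGroup F] [NormedSpace ℝ F] {f g : E → F} {x : E}
    (h : f =ᶠ[nhds x] g) (k : ℕ) :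
    iteratedFDeriv ℝ k f x = iteratedFDeriv ℝ k g x := by
  simp only [← iteratedFDerivWithin_univ]
  exact (h.filter_mono nhdsWithin_le_nhds).iteratedFDerivWithin_eq h.self_of_nhds k

-- scaling of iterated derivatives
lemma aux_itfd_smul {E : Type*} [NormedAddCommGroup E] [NormedSpace ℝ E]
    (g : E → ℝ) (hg : ContDiff ℝ (⊤ : ℕ∞) g) (c : ℝ) (hc : 0 ≤ c) (k : ℕ) (x : E) :
    ‖iteratedFDeriv ℝ k (fun y => g (c • y)) x‖ = c ^ k * ‖iteratedFDeriv ℝ k g (c • x)‖ := by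
  have hL := (c • ContinuousLinearMap.id ℝ E).iteratedFDeriv_comp_right hg x
    (i := k) (by exact_mod_cast le_top)
  have hfun : (fun y => g (c • y)) = g ∘ (c • ContinuousLinearMap.id ℝ E) := by
    funext y; simp
  rw [hfun, hL, show ((c • ContinuousLinearMap.id ℝ E) x) = c • x by simp]
  have : (iteratedFDeriv ℝ k g (c • x)).compContinuousLinearMap
      (fun _ => c • ContinuousLinearMap.id ℝ E)
      = (c ^ k) • iteratedFDeriv ℝ k g (c • x) := by
    ext v
    simp only [ContinuousMultilinearMap.compContinuousLinearMap_apply,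
      ContinuousMultilinearMap.smul_apply]
    have := (iteratedFDeriv ℝ k g (c • x)).map_smul_univ (fun _ : Fin k => c) v
    simpa [Finset.prod_const] using this
  rw [this]
  rw [norm_smul (c ^ k) (iteratedFDeriv ℝ k g (c • x))]
  rw [Real.norm_eq_abs, abs_of_nonneg (pow_nonneg hc k)]


-- bound on iterated derivatives up to order k on a compact set
lemma aux_bound_on_compact {E : Type*} [NormedAddCommGroup E] [NormedSpace ℝ E]
    (g : E → ℝ) (hg : ContDiff ℝ (⊤ : ℕ∞) g) (k : ℕ) (K : Set E) (hK : IsCompact K) :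
    ∃ C : ℝ, 0 ≤ C ∧ ∀ x ∈ K, ∀ i ≤ k, ‖iteratedFDeriv ℝ i g x‖ ≤ C := by
  have hcont : Continuous (fun x => ∑ i ∈ Finset.range (k + 1), ‖iteratedFDeriv ℝ i g x‖) := by
    apply continuous_finset_sum
    intro i _
    exact (hg.continuous_iteratedFDeriv (by exact_mod_cast le_top)).norm
  obtain ⟨C, hC⟩ := hK.exists_bound_of_continuousOn hcont.continuousOn
  refine ⟨max C 0, le_max_right _ _, fun x hx i hik => ?_⟩
  have h1 : ‖iteratedFDeriv ℝ i g x‖ ≤ ∑ j ∈ Finset.range (k + 1), ‖iteratedFDeriv ℝ j g x‖ :=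
    Finset.single_le_sum (f := fun j => ‖iteratedFDeriv ℝ j g x‖)
      (fun j _ => norm_nonneg _) (Finset.mem_range.2 (Nat.lt_succ_of_le hik))
  have h2 := hC x hx
  rw [Real.norm_eq_abs] at h2
  have := (le_abs_self _).trans h2
  exact h1.trans (this.trans (le_max_left _ _))

-- positive lower bound on a compact set
lemma aux_pos_lower {E : Type*} [NormedAddCommGroup E] (K : Set E) (hK : IsCompact K)
    (f : E → ℝ) (hf : Continuous f) (hpos : ∀ x ∈ K, 0 < f x) :
    ∃ δ > 0, ∀ x ∈ K, δ ≤ f x := by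
  rcases K.eq_empty_or_nonempty with h | h
  · exact ⟨1, one_pos, by simp [h]⟩
  · obtain ⟨x₀, hx₀K, hmin⟩ := hK.exists_isMinOn h hf.continuousOn
    exact ⟨f x₀, hpos _ hx₀K, fun x hx => hmin hx⟩


set_option maxHeartbeats 2000000 in
theorem stmt_4 {n : ℕ} (m f : EuclideanSpace ℝ (Fin n) → ℝ)
    (hm : ContDiff ℝ (⊤ : ℕ∞) m) (hf : ContDiff ℝ (⊤ : ℕ∞) f)
    (hmhom : ∀ ξ : EuclideanSpace ℝ (Fin n), 1 ≤ ‖ξ‖ → ∀ c : ℝ, 1 ≤ c → m (c • ξ) = m ξ)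
    (hfhom : ∀ ξ : EuclideanSpace ℝ (Fin n), 1 ≤ ‖ξ‖ → ∀ c : ℝ, 1 ≤ c → f (c • ξ) = c * f ξ)
    (hfpos : ∀ ξ : EuclideanSpace ℝ (Fin n), 1 ≤ ‖ξ‖ → 0 < f ξ)
    (G : EuclideanSpace ℝ (Fin n) → ℝ)
    (hG : ∀ ξ, G ξ = m ξ * Real.log (Real.sqrt (1 + f ξ ^ 2))) :
    ∀ μ : ℝ, 0 < μ → ∀ k : ℕ, ∃ C > 0, ∀ ξ : EuclideanSpace ℝ (Fin n),
      ‖iteratedFDeriv ℝ k G ξ‖ ≤ C * (1 + ‖ξ‖) ^ (μ - k) := by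
  intro μ hμ k
  have hm' : ContDiff ℝ (⊤ : ℕ∞) m := hm.of_le (by simp)
  have hf' : ContDiff ℝ (⊤ : ℕ∞) f := hf.of_le (by simp)
  have hfsq : ContDiff ℝ (⊤ : ℕ∞) (fun x => f x ^ 2) := hf'.pow 2
  have hGeq : G = fun ξ => m ξ * (Real.log (1 + f ξ ^ 2) / 2) := by
    funext ξ
    rw [hG ξ, Real.log_sqrt (by positivity)]
  have hGsmooth : ContDiff ℝ (⊤ : ℕ∞) G := by
    rw [hGeq]
    exact hm'.mul (((contDiff_const.add hfsq).log (fun x => by positivity)).div_const 2)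
  -- constants on compact sets
  obtain ⟨Cm, hCm0, hCm⟩ := aux_bound_on_compact m hm' k
    (sphere (0 : EuclideanSpace ℝ (Fin n)) 2) (isCompact_sphere 0 2)
  obtain ⟨Cq, hCq0, hCq⟩ := aux_bound_on_compact (fun x => f x ^ 2) hfsq k
    (sphere (0 : EuclideanSpace ℝ (Fin n)) 2) (isCompact_sphere 0 2)
  obtain ⟨δ, hδ, hδle⟩ := aux_pos_lower (sphere (0 : EuclideanSpace ℝ (Fin n)) 2)
    (isCompact_sphere 0 2) f hf'.continuous
    (fun x hx => hfpos x (by rw [mem_sphere_zero_iff_norm] at hx; rw [hx]; norm_num))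
  obtain ⟨C₀, hC₀0, hC₀⟩ := aux_bound_on_compact G hGsmooth k
    (closedBall (0 : EuclideanSpace ℝ (Fin n)) 2) (isCompact_closedBall 0 2)
  set b : ℝ := δ ^ 2 / 2 with hbdef
  have hb : 0 < b := by positivity
  have hsphere_lb : ∀ x ∈ sphere (0 : EuclideanSpace ℝ (Fin n)) 2, b < f x ^ 2 := by
    intro x hx
    have h1 : δ ≤ f x := hδle x hx
    have h2 : δ ^ 2 ≤ f x ^ 2 := by nlinarith
    have : b < δ ^ 2 := by rw [hbdef]; linarith [sq_nonneg δ]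
    linarith
  have hsphere_ub : ∀ x ∈ sphere (0 : EuclideanSpace ℝ (Fin n)) 2, f x ^ 2 ≤ Cq := by
    intro x hx
    have := hCq x hx 0 (Nat.zero_le k)
    rwa [norm_iteratedFDeriv_zero, Real.norm_eq_abs, abs_of_nonneg (sq_nonneg _)] at this
  set s : Set (EuclideanSpace ℝ (Fin n)) := {x | b < f x ^ 2} with hsdef
  have hs : IsOpen s := isOpen_lt continuous_const (hf'.continuous.pow 2)
  have hsub : ∀ x ∈ sphere (0 : EuclideanSpace ℝ (Fin n)) 2, x ∈ s := fun x hx =>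
    hsphere_lb x hx
  set D : ℝ := max 1 Cq with hDdef
  have hD1 : (1 : ℝ) ≤ D := le_max_left _ _
  set Cout : ℝ := ((Nat.factorial k) : ℝ) * (max 1 b⁻¹) ^ k + |Real.log b| + |Real.log (1 + Cq)| with hCoutdef
  have hCout0 : 0 ≤ Cout := by positivity
  set Cψ : ℝ := ((Nat.factorial k) : ℝ) * Cout * D ^ k with hCψdef
  have hCψ0 : 0 ≤ Cψ := by positivity
  set C₂ : ℝ := 2 ^ k * (Cm * Cψ) with hC₂def
  have hC₂0 : 0 ≤ C₂ := by positivity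
  -- bound on the derivatives of the outer logarithm
  have houter : ∀ t : ℝ, 0 < t → t ≤ 1 → ∀ i ≤ k, ∀ u : ℝ, b < u → u ≤ Cq →
      ‖iteratedFDeriv ℝ i (fun v => Real.log (t + v)) u‖ ≤ Cout := by
    intro t ht0 ht1 i hik u hub huCq
    have hu0 : 0 < u := hb.trans hub
    have htu : 0 < t + u := by linarith
    have hnonneg : (0 : ℝ) ≤ ((Nat.factorial k) : ℝ) * (max 1 b⁻¹) ^ k := by positivity
    rw [norm_iteratedFDeriv_eq_norm_iteratedDeriv]
    cases i with
    | zero =>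
      rw [iteratedDeriv_zero, Real.norm_eq_abs]
      have h1 : Real.log b ≤ Real.log (t + u) := Real.log_le_log hb (by linarith)
      have h2 : Real.log (t + u) ≤ Real.log (1 + Cq) := Real.log_le_log htu (by linarith)
      have h3 : |Real.log (t + u)| ≤ max |Real.log b| |Real.log (1 + Cq)| :=
        abs_le_max_abs_abs h1 h2
      have h4 : max |Real.log b| |Real.log (1 + Cq)| ≤ |Real.log b| + |Real.log (1 + Cq)| :=
        max_le (le_add_of_nonneg_right (abs_nonneg _)) (le_add_of_nonneg_left (abs_nonneg _))
      rw [hCoutdef]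
      linarith
    | succ i' =>
      rw [aux_log_iteratedDeriv t i' u htu, Real.norm_eq_abs, abs_div, abs_mul, abs_pow,
        abs_neg, abs_one, one_pow, one_mul, abs_of_nonneg (by positivity : (0:ℝ) ≤ (Nat.factorial i' : ℝ)),
        abs_of_pos (pow_pos htu _)]
      have hfac : (Nat.factorial i' : ℝ) ≤ ((Nat.factorial k) : ℝ) := by
        exact_mod_cast Nat.factorial_le (le_trans (Nat.le_succ i') hik)
      have hinv : (t + u)⁻¹ ≤ max 1 b⁻¹ := by
        have h1 : (t + u)⁻¹ ≤ b⁻¹ := by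
          apply inv_anti₀ hb
          linarith
        exact h1.trans (le_max_right _ _)
      have hpow : ((t + u) ^ (i' + 1))⁻¹ ≤ (max 1 b⁻¹) ^ k := by
        rw [← inv_pow]
        calc ((t + u)⁻¹) ^ (i' + 1) ≤ (max 1 b⁻¹) ^ (i' + 1) :=
              pow_le_pow_left₀ (inv_nonneg.2 htu.le) hinv _
          _ ≤ (max 1 b⁻¹) ^ k := pow_le_pow_right₀ (le_max_left _ _) hik
      have h5 : (Nat.factorial i' : ℝ) / (t + u) ^ (i' + 1)
          ≤ ((Nat.factorial k) : ℝ) * (max 1 b⁻¹) ^ k := by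
        rw [div_eq_mul_inv]
        apply mul_le_mul hfac hpow (by positivity) (by positivity)
      rw [hCoutdef]
      have := abs_nonneg (Real.log b)
      have := abs_nonneg (Real.log (1 + Cq))
      linarith
  -- bound on the derivatives of the shifted log of f squared
  have hψ : ∀ t : ℝ, 0 < t → t ≤ 1 → ∀ j ≤ k, ∀ η ∈ sphere (0 : EuclideanSpace ℝ (Fin n)) 2,
      ‖iteratedFDerivWithin ℝ j (fun x => Real.log (t + f x ^ 2)) s η‖ ≤ Cψ := by
    intro t ht0 ht1 j hjk η hη
    have hηs : η ∈ s := hsub η hη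
    have hmaps : Set.MapsTo (fun x => f x ^ 2) s (Set.Ioi b) := fun x hx => hx
    have houterOn : ContDiffOn ℝ (k : WithTop ℕ∞) (fun u => Real.log (t + u)) (Set.Ioi b) := by
      apply ContDiffOn.log
      · exact (contDiffOn_const.add contDiffOn_id)
      · intro u hu
        have h' : b < u := hu
        exact ne_of_gt (by linarith)
    have hqOn : ContDiffOn ℝ (k : WithTop ℕ∞) (fun x => f x ^ 2) s :=
      (hfsq.of_le (by exact_mod_cast le_top)).contDiffOn
    have hC : ∀ i, i ≤ j → ‖iteratedFDerivWithin ℝ i (fun u => Real.log (t + u))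
        (Set.Ioi b) ((fun x => f x ^ 2) η)‖ ≤ Cout := by
      intro i hij
      have hmem : f η ^ 2 ∈ Set.Ioi b := hηs
      rw [iteratedFDerivWithin_of_isOpen i isOpen_Ioi hmem]
      exact houter t ht0 ht1 i (hij.trans hjk) (f η ^ 2) hmem (hsphere_ub η hη)
    have hD : ∀ i, 1 ≤ i → i ≤ j → ‖iteratedFDerivWithin ℝ i (fun x => f x ^ 2) s η‖ ≤ D ^ i := by
      intro i hi1 hij
      rw [iteratedFDerivWithin_of_isOpen i hs hηs]
      calc ‖iteratedFDeriv ℝ i (fun x => f x ^ 2) η‖ ≤ Cq := hCq η hη i (hij.trans hjk)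
        _ ≤ D := le_max_right _ _
        _ ≤ D ^ i := le_self_pow₀ hD1 (by omega)
    have hcomp := norm_iteratedFDerivWithin_comp_le houterOn hqOn
      (by exact_mod_cast hjk) (uniqueDiffOn_Ioi b) hs.uniqueDiffOn hmaps hηs hC hD
    have heq : ((fun u => Real.log (t + u)) ∘ (fun x => f x ^ 2))
        = fun x => Real.log (t + f x ^ 2) := rfl
    rw [heq] at hcomp
    calc ‖iteratedFDerivWithin ℝ j (fun x => Real.log (t + f x ^ 2)) s η‖
        ≤ ((Nat.factorial j) : ℝ) * Cout * D ^ j := hcomp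
      _ ≤ ((Nat.factorial k) : ℝ) * Cout * D ^ k := by
          have h1 : ((Nat.factorial j) : ℝ) ≤ ((Nat.factorial k) : ℝ) := by exact_mod_cast Nat.factorial_le hjk
          have h2 : D ^ j ≤ D ^ k := pow_le_pow_right₀ hD1 hjk
          have h3 : (0:ℝ) ≤ D ^ j := by positivity
          have h4 : (0:ℝ) ≤ ((Nat.factorial k) : ℝ) * Cout := by positivity
          calc ((Nat.factorial j) : ℝ) * Cout * D ^ j
              ≤ ((Nat.factorial k) : ℝ) * Cout * D ^ j :=
                mul_le_mul_of_nonneg_right (mul_le_mul_of_nonneg_right h1 hCout0) h3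
            _ ≤ ((Nat.factorial k) : ℝ) * Cout * D ^ k := by
                rw [mul_assoc, mul_assoc]
                exact mul_le_mul_of_nonneg_left (mul_le_mul_of_nonneg_left h2 hCout0) (by positivity)
  -- bound on the derivatives of the second summand
  have hφ₂ : ∀ t : ℝ, 0 < t → t ≤ 1 → ∀ η ∈ sphere (0 : EuclideanSpace ℝ (Fin n)) 2,
      ‖iteratedFDerivWithin ℝ k (fun x => ((2⁻¹ : ℝ) • m x) * Real.log (t + f x ^ 2)) s η‖
        ≤ C₂ := by
    intro t ht0 ht1 η hη
    have hηs : η ∈ s := hsub η hη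
    have hm2On : ContDiffOn ℝ (k : WithTop ℕ∞) (fun x => (2⁻¹ : ℝ) • m x) s :=
      ((hm.of_le (by exact_mod_cast le_top)).const_smul (2⁻¹ : ℝ)).contDiffOn
    have hψOn : ContDiffOn ℝ (k : WithTop ℕ∞) (fun x => Real.log (t + f x ^ 2)) s := by
      apply ContDiffOn.log
      · exact ((contDiff_const.add hfsq).of_le (by exact_mod_cast le_top)).contDiffOn
      · intro x hx
        have h' : b < f x ^ 2 := hx
        exact ne_of_gt (by linarith)
    have hmul := norm_iteratedFDerivWithin_mul_le hm2On hψOn hs.uniqueDiffOn hηs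
      (le_refl (k : WithTop ℕ∞))
    have hterm : ∀ i ∈ Finset.range (k + 1),
        (k.choose i : ℝ) * ‖iteratedFDerivWithin ℝ i (fun x => (2⁻¹ : ℝ) • m x) s η‖ *
          ‖iteratedFDerivWithin ℝ (k - i) (fun x => Real.log (t + f x ^ 2)) s η‖
        ≤ (k.choose i : ℝ) * (Cm * Cψ) := by
      intro i hi
      rw [Finset.mem_range] at hi
      have hik : i ≤ k := Nat.lt_succ_iff.1 hi
      have h1 : ‖iteratedFDerivWithin ℝ i (fun x => (2⁻¹ : ℝ) • m x) s η‖ ≤ Cm := by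
        rw [iteratedFDerivWithin_of_isOpen i hs hηs,
          iteratedFDeriv_const_smul_apply' (hm.of_le (by exact_mod_cast le_top)).contDiffAt, norm_smul]
        have := hCm η hη i hik
        rw [Real.norm_eq_abs]
        have h2 : |(2⁻¹ : ℝ)| ≤ 1 := by rw [abs_of_pos]; norm_num; norm_num
        nlinarith [norm_nonneg (iteratedFDeriv ℝ i m η)]
      have h2 : ‖iteratedFDerivWithin ℝ (k - i) (fun x => Real.log (t + f x ^ 2)) s η‖ ≤ Cψ :=
        hψ t ht0 ht1 (k - i) (Nat.sub_le k i) η hη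
      rw [mul_assoc]
      apply mul_le_mul_of_nonneg_left _ (Nat.cast_nonneg _)
      exact mul_le_mul h1 h2 (norm_nonneg _) hCm0
    calc ‖iteratedFDerivWithin ℝ k (fun x => ((2⁻¹ : ℝ) • m x) * Real.log (t + f x ^ 2)) s η‖
        ≤ ∑ i ∈ Finset.range (k + 1), (k.choose i : ℝ) *
            ‖iteratedFDerivWithin ℝ i (fun x => (2⁻¹ : ℝ) • m x) s η‖ *
            ‖iteratedFDerivWithin ℝ (k - i) (fun x => Real.log (t + f x ^ 2)) s η‖ := hmul
      _ ≤ ∑ i ∈ Finset.range (k + 1), (k.choose i : ℝ) * (Cm * Cψ) :=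
          Finset.sum_le_sum hterm
      _ = C₂ := by
          rw [← Finset.sum_mul]
          rw [hC₂def]
          congr 1
          exact_mod_cast Nat.sum_range_choose k
  -- main estimate for large ξ
  have hlarge : ∀ ξ : EuclideanSpace ℝ (Fin n), 2 ≤ ‖ξ‖ →
      ‖iteratedFDeriv ℝ k G ξ‖ ≤ (Cm / μ + C₂) * (‖ξ‖ / 2) ^ (μ - (k : ℝ)) := by
    intro ξ hξ
    have hξ0 : (0:ℝ) < ‖ξ‖ := by linarith
    set c : ℝ := ‖ξ‖ / 2 with hcdef
    have hc1 : 1 ≤ c := by rw [hcdef]; linarith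
    have hc0 : (0:ℝ) < c := by linarith
    set t : ℝ := (c ^ 2)⁻¹ with htdef
    have ht0 : 0 < t := by positivity
    have ht1 : t ≤ 1 := by
      rw [htdef]
      have h1 : (1:ℝ) ≤ c ^ 2 := by nlinarith
      exact inv_le_one_of_one_le₀ h1
    set η : EuclideanSpace ℝ (Fin n) := c⁻¹ • ξ with hηdef
    have hcη : c • η = ξ := smul_inv_smul₀ (ne_of_gt hc0) ξ
    have hη : η ∈ sphere (0 : EuclideanSpace ℝ (Fin n)) 2 := by
      rw [mem_sphere_zero_iff_norm, hηdef, norm_smul, Real.norm_eq_abs,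
        abs_of_pos (inv_pos.2 hc0), hcdef]
      field_simp
    have hηs : η ∈ s := hsub η hη
    set φ : EuclideanSpace ℝ (Fin n) → ℝ :=
      fun x => Real.log c • m x + ((2⁻¹ : ℝ) • m x) * Real.log (t + f x ^ 2) with hφdef
    have hU : ∀ x : EuclideanSpace ℝ (Fin n), 1 < ‖x‖ → G (c • x) = φ x := by
      intro x hx
      have hx1 : 1 ≤ ‖x‖ := hx.le
      have hfx : t + f x ^ 2 > 0 := by positivity
      have hkey : 1 + (c * f x) ^ 2 = c ^ 2 * (t + f x ^ 2) := by
        rw [htdef]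
        field_simp
      have h1 : G (c • x) = m x * (Real.log (1 + (c * f x) ^ 2) / 2) := by
        rw [hGeq]
        simp only []
        rw [hmhom x hx1 c hc1, hfhom x hx1 c hc1]
      rw [h1, hkey, Real.log_mul (by positivity) (ne_of_gt hfx), ← Real.rpow_two,
        Real.log_rpow hc0]
      rw [hφdef]
      simp only [smul_eq_mul]
      ring
    have hcong : iteratedFDeriv ℝ k (fun y => G (c • y)) η = iteratedFDeriv ℝ k φ η := by
      apply aux_itfd_congr
      have hUopen : IsOpen {x : EuclideanSpace ℝ (Fin n) | 1 < ‖x‖} :=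
        isOpen_lt continuous_const continuous_norm
      have hmem : η ∈ {x : EuclideanSpace ℝ (Fin n) | 1 < ‖x‖} := by
        have : ‖η‖ = 2 := mem_sphere_zero_iff_norm.1 hη
        simp only [Set.mem_setOf_eq, this]
        norm_num
      filter_upwards [hUopen.mem_nhds hmem] with x hx using hU x hx
    have hscale := aux_itfd_smul G hGsmooth c hc0.le k η
    rw [hcη] at hscale
    -- bound on the derivatives of φ at η
    have hφb : ‖iteratedFDeriv ℝ k φ η‖ ≤ Real.log c * Cm + C₂ := by
      rw [← iteratedFDerivWithin_of_isOpen (𝕜 := ℝ) (f := φ) k hs hηs]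
      have hφ1On : ContDiffOn ℝ (k : WithTop ℕ∞) (fun x => Real.log c • m x) s :=
        ((hm.of_le (by exact_mod_cast le_top)).const_smul (Real.log c)).contDiffOn
      have hφ2On : ContDiffOn ℝ (k : WithTop ℕ∞)
          (fun x => ((2⁻¹ : ℝ) • m x) * Real.log (t + f x ^ 2)) s := by
        refine ContDiffOn.mul ((hm.of_le (by exact_mod_cast le_top)).const_smul (2⁻¹:ℝ)).contDiffOn ?_
        apply ContDiffOn.log
        · exact ((contDiff_const.add hfsq).of_le (by exact_mod_cast le_top)).contDiffOn
        · intro x hx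
          have h' : b < f x ^ 2 := hx
          exact ne_of_gt (by linarith)
      have hadd := iteratedFDerivWithin_add_apply' (i := k) (hφ1On η hηs) (hφ2On η hηs) hs.uniqueDiffOn hηs
      rw [hφdef]
      rw [hadd]
      refine (norm_add_le _ _).trans ?_
      have hterm1 : ‖iteratedFDerivWithin ℝ k (fun x => Real.log c • m x) s η‖
          ≤ Real.log c * Cm := by
        rw [iteratedFDerivWithin_of_isOpen k hs hηs,
          iteratedFDeriv_const_smul_apply' (hm.of_le (by exact_mod_cast le_top)).contDiffAt, norm_smul, Real.norm_eq_abs,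
          abs_of_nonneg (Real.log_nonneg hc1)]
        exact mul_le_mul_of_nonneg_left (hCm η hη k le_rfl) (Real.log_nonneg hc1)
      have hterm2 := hφ₂ t ht0 ht1 η hη
      linarith
    -- combine
    have hmain : c ^ k * ‖iteratedFDeriv ℝ k G ξ‖ ≤ Real.log c * Cm + C₂ := by
      rw [← hscale, hcong]
      exact hφb
    have hck : (0:ℝ) < c ^ k := by positivity
    have hstep : ‖iteratedFDeriv ℝ k G ξ‖ ≤ (Real.log c * Cm + C₂) / c ^ k := by
      rw [le_div_iff₀ hck]
      linarith [hmain]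
    -- log c ≤ c ^ μ / μ
    have hcrμ : (0:ℝ) < c ^ μ := Real.rpow_pos_of_pos hc0 μ
    have hlogc : Real.log c ≤ c ^ μ / μ := by
      have h1 : Real.log (c ^ μ) = μ * Real.log c := Real.log_rpow hc0 μ
      have h2 : Real.log (c ^ μ) ≤ c ^ μ := by
        have := Real.log_le_sub_one_of_pos hcrμ
        linarith
      rw [h1] at h2
      rw [le_div_iff₀ hμ]
      linarith
    have hcμ1 : (1:ℝ) ≤ c ^ μ := by
      rw [show (1:ℝ) = 1 ^ μ from (Real.one_rpow μ).symm]
      exact Real.rpow_le_rpow zero_le_one hc1 hμ.le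
    have hnum : Real.log c * Cm + C₂ ≤ (Cm / μ + C₂) * c ^ μ := by
      have h1 : Real.log c * Cm ≤ (c ^ μ / μ) * Cm :=
        mul_le_mul_of_nonneg_right hlogc hCm0
      have h2 : C₂ ≤ C₂ * c ^ μ := le_mul_of_one_le_right hC₂0 hcμ1
      have h3 : (c ^ μ / μ) * Cm = (Cm / μ) * c ^ μ := by ring
      linarith
    have hpoweq : c ^ μ / c ^ k = c ^ (μ - (k : ℝ)) := by
      rw [← Real.rpow_natCast c k, ← Real.rpow_sub hc0]
    calc ‖iteratedFDeriv ℝ k G ξ‖ ≤ (Real.log c * Cm + C₂) / c ^ k := hstep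
      _ ≤ ((Cm / μ + C₂) * c ^ μ) / c ^ k := by
          exact (div_le_div_iff_of_pos_right hck).2 hnum
      _ = (Cm / μ + C₂) * (c ^ μ / c ^ k) := by ring
      _ = (Cm / μ + C₂) * c ^ (μ - (k : ℝ)) := by rw [hpoweq]
  -- conclusion
  set e : ℝ := μ - (k : ℝ) with hedef
  set Kc : ℝ := max 1 ((3:ℝ) ^ ((k:ℝ) - μ)) with hKcdef
  have hKc1 : (1:ℝ) ≤ Kc := le_max_left _ _
  set ε : ℝ := min 1 ((3:ℝ) ^ e) with hεdef
  have hε : 0 < ε := lt_min one_pos (Real.rpow_pos_of_pos (by norm_num) e)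
  have hCsum0 : 0 ≤ Cm / μ + C₂ := by positivity
  refine ⟨max (C₀ / ε) ((Cm / μ + C₂) * Kc) + 1, ?_, fun ξ => ?_⟩
  · have h1 : 0 ≤ C₀ / ε := div_nonneg hC₀0 hε.le
    have h2 : C₀ / ε ≤ max (C₀ / ε) ((Cm / μ + C₂) * Kc) := le_max_left _ _
    linarith
  · have hξnn : (0:ℝ) ≤ ‖ξ‖ := norm_nonneg ξ
    have hbase : (0:ℝ) < 1 + ‖ξ‖ := by linarith
    have hrnn : (0:ℝ) ≤ (1 + ‖ξ‖) ^ e := Real.rpow_nonneg hbase.le e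
    have hCle : max (C₀ / ε) ((Cm / μ + C₂) * Kc) ≤ max (C₀ / ε) ((Cm / μ + C₂) * Kc) + 1 := by
      linarith
    rcases le_or_gt ‖ξ‖ 2 with hle | hgt
    · have h1 := hC₀ ξ (mem_closedBall_zero_iff.2 hle) k le_rfl
      have h2 : ε ≤ (1 + ‖ξ‖) ^ e := by
        rcases le_or_gt 0 e with he | he
        · calc ε ≤ 1 := min_le_left _ _
            _ = (1:ℝ) ^ e := (Real.one_rpow e).symm
            _ ≤ (1 + ‖ξ‖) ^ e := Real.rpow_le_rpow zero_le_one (by linarith) he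
        · calc ε ≤ (3:ℝ) ^ e := min_le_right _ _
            _ ≤ (1 + ‖ξ‖) ^ e := Real.rpow_le_rpow_of_nonpos hbase (by linarith) he.le
      calc ‖iteratedFDeriv ℝ k G ξ‖ ≤ C₀ := h1
        _ = (C₀ / ε) * ε := by field_simp
        _ ≤ (C₀ / ε) * ((1 + ‖ξ‖) ^ e) :=
            mul_le_mul_of_nonneg_left h2 (div_nonneg hC₀0 hε.le)
        _ ≤ (max (C₀ / ε) ((Cm / μ + C₂) * Kc) + 1) * ((1 + ‖ξ‖) ^ e) :=
            mul_le_mul_of_nonneg_right ((le_max_left _ _).trans hCle) hrnn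
    · have h1 := hlarge ξ hgt.le
      have hc0' : (0:ℝ) < ‖ξ‖ / 2 := by linarith
      have h2 : (‖ξ‖ / 2) ^ e ≤ Kc * (1 + ‖ξ‖) ^ e := by
        rcases le_or_gt 0 e with he | he
        · calc (‖ξ‖ / 2) ^ e ≤ (1 + ‖ξ‖) ^ e :=
              Real.rpow_le_rpow hc0'.le (by linarith) he
            _ ≤ Kc * (1 + ‖ξ‖) ^ e := le_mul_of_one_le_left hrnn hKc1
        · have h3 : 1 + ‖ξ‖ ≤ 3 * (‖ξ‖ / 2) := by linarith
          have h4 : (3 * (‖ξ‖ / 2)) ^ e ≤ (1 + ‖ξ‖) ^ e :=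
            Real.rpow_le_rpow_of_nonpos hbase h3 he.le
          have h5 : (3 * (‖ξ‖ / 2)) ^ e = (3:ℝ) ^ e * (‖ξ‖ / 2) ^ e :=
            Real.mul_rpow (by norm_num) hc0'.le
          have h6 : (‖ξ‖ / 2) ^ e = (3:ℝ) ^ (-e) * (3 * (‖ξ‖ / 2)) ^ e := by
            rw [h5, ← mul_assoc, ← Real.rpow_add (by norm_num : (0:ℝ) < 3)]
            simp
          rw [h6]
          have h7 : (3:ℝ) ^ (-e) ≤ Kc := by
            rw [show -e = (k:ℝ) - μ by rw [hedef]; ring]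
            exact le_max_right _ _
          calc (3:ℝ) ^ (-e) * (3 * (‖ξ‖ / 2)) ^ e ≤ (3:ℝ) ^ (-e) * (1 + ‖ξ‖) ^ e :=
              mul_le_mul_of_nonneg_left h4 (Real.rpow_nonneg (by norm_num) _)
            _ ≤ Kc * (1 + ‖ξ‖) ^ e := mul_le_mul_of_nonneg_right h7 hrnn
      calc ‖iteratedFDeriv ℝ k G ξ‖ ≤ (Cm / μ + C₂) * (‖ξ‖ / 2) ^ e := h1
        _ ≤ (Cm / μ + C₂) * (Kc * (1 + ‖ξ‖) ^ e) := mul_le_mul_of_nonneg_left h2 hCsum0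
        _ = ((Cm / μ + C₂) * Kc) * ((1 + ‖ξ‖) ^ e) := by ring
        _ ≤ (max (C₀ / ε) ((Cm / μ + C₂) * Kc) + 1) * ((1 + ‖ξ‖) ^ e) :=
            mul_le_mul_of_nonneg_right ((le_max_right _ _).trans hCle) hrnn
end

section
/- Let m : ℝⁿ → ℝ be a C^∞ function with m(c·ξ) = m(ξ) for every ξ with ‖ξ‖ ≥ 1 and every c ≥ 1, let f : ℝⁿ → ℝ be a C^∞ function with f(c·ξ) = c·f(ξ) for every ξ with ‖ξ‖ ≥ 1 and every c ≥ 1 and f(ξ) > 0 for ‖ξ‖ ≥ 1, and set G(ξ) := m(ξ) · log √(1 + f(ξ)²) and A(ξ) := exp(G(ξ)). Then A is a symbol of variable order m(ξ) and type (ρ, 1−ρ) for every ρ < 1: for every ρ with 0 < ρ < 1 and every k ∈ ℕ there exists C > 0 such that ‖D^k A(ξ)‖ ≤ C · (1 + ‖ξ‖)^{m(ξ)} · (1 + ‖ξ‖)^{−ρk} for all ξ ∈ ℝⁿ, where (1 + ‖ξ‖)^{m(ξ)} denotes the real power with variable exponent m(ξ). -/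
open scoped ContDiff

namespace Stmt5Aux

lemma max_const (g : ℕ → ℝ) (k : ℕ) : ∃ C : ℝ, 1 ≤ C ∧ ∀ j ≤ k, g j ≤ C := by
  refine ⟨1 + ∑ j ∈ Finset.range (k + 1), max (g j) 0, ?_, fun j hj => ?_⟩
  · have : (0:ℝ) ≤ ∑ j ∈ Finset.range (k + 1), max (g j) 0 :=
      Finset.sum_nonneg fun i _ => le_max_right _ _
    linarith
  · have h1 : g j ≤ max (g j) 0 := le_max_left _ _
    have h2 : max (g j) 0 ≤ ∑ i ∈ Finset.range (k + 1), max (g i) 0 :=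
      Finset.single_le_sum (f := fun i => max (g i) 0) (fun i _ => le_max_right _ _)
        (Finset.mem_range.2 (Nat.lt_succ_of_le hj))
    linarith

noncomputable def chi (δ : ℝ) : ℝ → ℝ := fun y =>
  Real.smoothTransition ((y - δ / 2) * (2 / δ)) * y
    + (1 - Real.smoothTransition ((y - δ / 2) * (2 / δ))) * (δ / 2)

lemma chi_contDiff (δ : ℝ) : ContDiff ℝ ∞ (chi δ) := by
  have h : ContDiff ℝ ∞ (fun y : ℝ => Real.smoothTransition ((y - δ / 2) * (2 / δ))) :=
    Real.smoothTransition.contDiff.comp ((contDiff_id.sub contDiff_const).mul contDiff_const)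
  exact (h.mul contDiff_id).add ((contDiff_const.sub h).mul contDiff_const)

lemma chi_pos {δ : ℝ} (hδ : 0 < δ) (y : ℝ) : 0 < chi δ y := by
  have h2 : 0 < δ / 2 := by linarith
  rcases le_or_gt y (δ / 2) with hy | hy
  · have : Real.smoothTransition ((y - δ / 2) * (2 / δ)) = 0 :=
      Real.smoothTransition.zero_of_nonpos
        (mul_nonpos_of_nonpos_of_nonneg (by linarith) (by positivity))
    simp [chi, this, h2]
  · have hs0 := Real.smoothTransition.nonneg ((y - δ / 2) * (2 / δ))
    have hs1 := Real.smoothTransition.le_one ((y - δ / 2) * (2 / δ))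
    have hc : chi δ y = Real.smoothTransition ((y - δ / 2) * (2 / δ)) * y
        + (1 - Real.smoothTransition ((y - δ / 2) * (2 / δ))) * (δ / 2) := rfl
    nlinarith [mul_nonneg hs0 (by linarith : (0:ℝ) ≤ y - δ / 2)]

lemma chi_eq {δ y : ℝ} (hδ : 0 < δ) (hy : δ ≤ y) : chi δ y = y := by
  have : Real.smoothTransition ((y - δ / 2) * (2 / δ)) = 1 := by
    apply Real.smoothTransition.one_of_one_le
    have hδ' : δ ≠ 0 := ne_of_gt hδ
    rw [show (1:ℝ) = (δ / 2) * (2 / δ) by field_simp]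
    exact mul_le_mul_of_nonneg_right (by linarith) (by positivity)
  simp [chi, this]

lemma exp_iter_norm (i : ℕ) (x : ℝ) : ‖iteratedFDeriv ℝ i Real.exp x‖ = Real.exp x := by
  rw [norm_iteratedFDeriv_eq_norm_iteratedDeriv, iteratedDeriv_eq_iterate, Real.iter_deriv_exp,
    Real.norm_eq_abs, abs_of_pos (Real.exp_pos x)]

lemma log_growth {ρ : ℝ} (hρ : ρ < 1) : ∃ K : ℝ, 1 ≤ K ∧ ∀ c : ℝ, 2 ≤ c →
    1 + Real.log c ≤ K * (1 + c) ^ (1 - ρ) := by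
  have h1ρ' : 0 < 1 - ρ := by linarith
  refine ⟨1 + 1 / (1 - ρ), le_add_of_nonneg_right (by positivity), fun c hc => ?_⟩
  have hc0 : (0:ℝ) < c := by linarith
  have h1ρ : 0 < 1 - ρ := by linarith
  have hlog : Real.log c ≤ c ^ (1 - ρ) / (1 - ρ) := by
    have h1 : Real.log (c ^ (1 - ρ)) = (1 - ρ) * Real.log c := Real.log_rpow hc0 _
    have h2 : Real.log (c ^ (1 - ρ)) ≤ c ^ (1 - ρ) := by
      have := Real.log_le_sub_one_of_pos (x := c ^ (1 - ρ)) (by positivity)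
      linarith
    rw [h1] at h2
    rw [le_div_iff₀ h1ρ]
    linarith
  have hone : (1:ℝ) ≤ (1 + c) ^ (1 - ρ) := by
    calc (1:ℝ) = 1 ^ (1 - ρ) := (Real.one_rpow _).symm
      _ ≤ (1 + c) ^ (1 - ρ) :=
        Real.rpow_le_rpow (x := 1) (y := 1 + c) zero_le_one (by linarith) (le_of_lt h1ρ)
  have hcc : c ^ (1 - ρ) ≤ (1 + c) ^ (1 - ρ) :=
    Real.rpow_le_rpow (le_of_lt hc0) (by linarith) (le_of_lt h1ρ)
  have h4 : (1/(1-ρ)) * c ^ (1-ρ) ≤ (1/(1-ρ)) * (1 + c) ^ (1 - ρ) :=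
    mul_le_mul_of_nonneg_left hcc (le_of_lt (one_div_pos.2 h1ρ))
  have h3 : c ^ (1-ρ)/(1-ρ) ≤ (1/(1-ρ)) * (1 + c) ^ (1 - ρ) := by
    rw [div_eq_inv_mul, ← one_div]; exact h4
  calc 1 + Real.log c ≤ (1 + c) ^ (1-ρ) + c ^ (1-ρ)/(1-ρ) := by linarith
    _ ≤ (1 + c) ^ (1-ρ) + (1/(1-ρ)) * (1 + c) ^ (1 - ρ) := by linarith
    _ = (1 + 1/(1-ρ)) * (1 + c) ^ (1-ρ) := by ring

lemma rpow_lower {b e M : ℝ} (hb1 : 1 ≤ b) (hb3 : b ≤ 3) (he : |e| ≤ M) :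
    (3:ℝ) ^ (-M) ≤ b ^ e := by
  have h1 : (3:ℝ) ^ (-M) ≤ b ^ (-M) :=
    Real.rpow_le_rpow_of_nonpos (by linarith) hb3 (by cases abs_le.1 he; linarith [abs_nonneg e])
  have h2 : b ^ (-M) ≤ b ^ e :=
    Real.rpow_le_rpow_of_exponent_le hb1 (by cases abs_le.1 he; linarith)
  linarith

end Stmt5Aux

namespace Stmt5Aux

variable {E : Type*} [NormedAddCommGroup E] [NormedSpace ℝ E]
variable {F : Type*} [NormedAddCommGroup F] [NormedSpace ℝ F]

lemma scale_bound (g : E → F) {c : ℝ} (hc : 0 < c) {i : ℕ}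
    (hg : ContDiff ℝ ∞ fun ξ => g (c • ξ)) (x : E) :
    ‖iteratedFDeriv ℝ i g x‖ ≤
      c⁻¹ ^ i * ‖iteratedFDeriv ℝ i (fun ξ => g (c • ξ)) (c⁻¹ • x)‖ := by
  set F' := fun ξ => g (c • ξ) with hF'
  set L : E →L[ℝ] E := c⁻¹ • ContinuousLinearMap.id ℝ E with hL
  have hgF : g = F' ∘ L := by
    funext ξ
    simp only [hF', Function.comp_apply, hL, ContinuousLinearMap.smul_apply,
      ContinuousLinearMap.id_apply, smul_smul, mul_inv_cancel₀ hc.ne', one_smul]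
  have hLx : L x = c⁻¹ • x := rfl
  have hLnorm : ‖L‖ ≤ c⁻¹ := by
    have h1 : ‖L‖ ≤ ‖c⁻¹‖ * ‖ContinuousLinearMap.id ℝ E‖ :=
      norm_smul_le c⁻¹ (ContinuousLinearMap.id ℝ E)
    have h2 : ‖ContinuousLinearMap.id ℝ E‖ ≤ 1 := ContinuousLinearMap.norm_id_le
    have h3 : ‖c⁻¹‖ = c⁻¹ := by rw [Real.norm_eq_abs, abs_of_pos (inv_pos.2 hc)]
    rw [h3] at h1
    nlinarith [norm_nonneg (ContinuousLinearMap.id ℝ E), inv_pos.2 hc]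
  conv_lhs => rw [hgF]
  rw [L.iteratedFDeriv_comp_right hg x (by exact_mod_cast le_top)]
  calc ‖(iteratedFDeriv ℝ i F' (L x)).compContinuousLinearMap fun _ => L‖
      ≤ ‖iteratedFDeriv ℝ i F' (L x)‖ * ∏ _j : Fin i, ‖L‖ :=
        ContinuousMultilinearMap.norm_compContinuousLinearMap_le _ _
    _ ≤ ‖iteratedFDeriv ℝ i F' (L x)‖ * c⁻¹ ^ i := by
        apply mul_le_mul_of_nonneg_left _ (norm_nonneg _)
        calc ∏ _j : Fin i, ‖L‖ ≤ ∏ _j : Fin i, c⁻¹ :=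
              Finset.prod_le_prod (fun _ _ => norm_nonneg _) (fun _ _ => hLnorm)
          _ = c⁻¹ ^ i := by simp
    _ = c⁻¹ ^ i * ‖iteratedFDeriv ℝ i F' (c⁻¹ • x)‖ := by rw [hLx, mul_comm]

lemma prodmk_iter_norm (t : ℝ) (x : E) {i : ℕ} (hi : 1 ≤ i) :
    ‖iteratedFDeriv ℝ i (fun ξ : E => ((t, ξ) : ℝ × E)) x‖ ≤ 1 := by
  set e : E → ℝ × E := fun ξ => (t, ξ) with he
  set L : E →L[ℝ] ℝ × E := (0 : E →L[ℝ] ℝ).prod (ContinuousLinearMap.id ℝ E) with hLdef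
  have hLnorm : ‖L‖ ≤ 1 := by
    apply ContinuousLinearMap.opNorm_le_bound _ zero_le_one
    intro y
    simp only [hLdef, ContinuousLinearMap.prod_apply, ContinuousLinearMap.zero_apply,
      ContinuousLinearMap.id_apply, Prod.norm_def, norm_zero, one_mul]
    exact max_le (norm_nonneg _) le_rfl
  have hfe : fderiv ℝ e = fun _ => L := by
    funext y
    exact (HasFDerivAt.prodMk (hasFDerivAt_const t y) (hasFDerivAt_id y)).fderiv
  obtain ⟨j, rfl⟩ : ∃ j, i = j + 1 := ⟨i - 1, (Nat.succ_pred_eq_of_pos hi).symm⟩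
  rw [← norm_iteratedFDeriv_fderiv, hfe]
  rcases j with _ | j'
  · rw [norm_iteratedFDeriv_zero]
    exact hLnorm
  · rw [iteratedFDeriv_const_of_ne (Nat.succ_ne_zero _)]
    simp

end Stmt5Aux


abbrev Eu (n : ℕ) : Type := EuclideanSpace ℝ (Fin n)
set_option maxHeartbeats 1000000 in
open scoped ContDiff in
theorem stmt_5 {n : ℕ} (m f : EuclideanSpace ℝ (Fin n) → ℝ)
    (hm : ContDiff ℝ (⊤ : ℕ∞) m) (hf : ContDiff ℝ (⊤ : ℕ∞) f)
    (hmhom : ∀ ξ : EuclideanSpace ℝ (Fin n), 1 ≤ ‖ξ‖ → ∀ c : ℝ, 1 ≤ c → m (c • ξ) = m ξ)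
    (hfhom : ∀ ξ : EuclideanSpace ℝ (Fin n), 1 ≤ ‖ξ‖ → ∀ c : ℝ, 1 ≤ c → f (c • ξ) = c * f ξ)
    (hfpos : ∀ ξ : EuclideanSpace ℝ (Fin n), 1 ≤ ‖ξ‖ → 0 < f ξ)
    (G A : EuclideanSpace ℝ (Fin n) → ℝ)
    (hG : ∀ ξ, G ξ = m ξ * Real.log (Real.sqrt (1 + f ξ ^ 2)))
    (hA : ∀ ξ, A ξ = Real.exp (G ξ)) :
    ∀ ρ : ℝ, 0 < ρ → ρ < 1 → ∀ k : ℕ, ∃ C > 0, ∀ ξ : EuclideanSpace ℝ (Fin n),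
      ‖iteratedFDeriv ℝ k A ξ‖ ≤ C * (1 + ‖ξ‖) ^ (m ξ) * (1 + ‖ξ‖) ^ (-(ρ * k)) := by
  intro ρ hρ0 hρ1 k
  have hm' : ContDiff ℝ ∞ m := hm.of_le (by simp)
  have hf' : ContDiff ℝ ∞ f := hf.of_le (by simp)
  -- smoothness of G and A
  have hGc : ∀ ξ : Eu n, G ξ = m ξ * (Real.log (1 + f ξ ^ 2) / 2) := by
    intro ξ; rw [hG ξ, Real.log_sqrt (by positivity)]
  have hGsmooth : ContDiff ℝ ∞ G := by
    have : G = fun ξ => m ξ * (Real.log (1 + f ξ ^ 2) / 2) := funext hGc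
    rw [this]
    exact hm'.mul (((contDiff_const.add (hf'.pow 2)).log (fun ξ => by positivity)).div_const 2)
  have hAsmooth : ContDiff ℝ ∞ A := by
    have : A = fun ξ => Real.exp (G ξ) := funext hA
    rw [this]
    exact Real.contDiff_exp.comp hGsmooth
  -- homogeneity consequences
  have hkey : ∀ x : Eu n, 1 ≤ ‖x‖ → ∃ u : Eu n, ‖u‖ = 1 ∧ m x = m u ∧ f x = ‖x‖ * f u := by
    intro x hx
    have hx0 : (0:ℝ) < ‖x‖ := lt_of_lt_of_le one_pos hx
    refine ⟨‖x‖⁻¹ • x, ?_, ?_, ?_⟩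
    · rw [norm_smul, Real.norm_eq_abs, abs_of_pos (inv_pos.2 hx0), inv_mul_cancel₀ hx0.ne']
    · have hu1 : (1:ℝ) ≤ ‖‖x‖⁻¹ • x‖ := by
        rw [norm_smul, Real.norm_eq_abs, abs_of_pos (inv_pos.2 hx0), inv_mul_cancel₀ hx0.ne']
      have := hmhom (‖x‖⁻¹ • x) hu1 ‖x‖ hx
      rwa [smul_smul, mul_inv_cancel₀ hx0.ne', one_smul] at this
    · have hu1 : (1:ℝ) ≤ ‖‖x‖⁻¹ • x‖ := by
        rw [norm_smul, Real.norm_eq_abs, abs_of_pos (inv_pos.2 hx0), inv_mul_cancel₀ hx0.ne']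
      have := hfhom (‖x‖⁻¹ • x) hu1 ‖x‖ hx
      rwa [smul_smul, mul_inv_cancel₀ hx0.ne', one_smul] at this
  -- sphere constants
  obtain ⟨a, ha0, hfa⟩ : ∃ a : ℝ, 0 < a ∧ ∀ u : Eu n, ‖u‖ = 1 → a ≤ f u := by
    rcases (Metric.sphere (0:Eu n) 1).eq_empty_or_nonempty with hS | hS
    · refine ⟨1, one_pos, fun u hu => ?_⟩
      exact absurd (show u ∈ Metric.sphere (0:Eu n) 1 by
        simpa [mem_sphere_iff_norm] using hu) (by simp [hS])
    · obtain ⟨u₀, hu₀S, hmin⟩ :=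
        (isCompact_sphere (0:Eu n) 1).exists_isMinOn hS hf'.continuous.continuousOn
      have hu₀ : ‖u₀‖ = 1 := by simpa [mem_sphere_iff_norm] using hu₀S
      refine ⟨f u₀, hfpos u₀ (by rw [hu₀]), fun u hu => hmin ?_⟩
      simpa [mem_sphere_iff_norm] using hu
  obtain ⟨b, hb1, hfb⟩ : ∃ b : ℝ, 1 ≤ b ∧ ∀ u : Eu n, ‖u‖ = 1 → f u ≤ b := by
    obtain ⟨b₀, hb₀⟩ := (isCompact_sphere (0:Eu n) 1).exists_bound_of_continuousOn
      hf'.continuous.continuousOn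
    refine ⟨max b₀ 1, le_max_right _ _, fun u hu => ?_⟩
    have := hb₀ u (by simpa [mem_sphere_iff_norm] using hu)
    rw [Real.norm_eq_abs] at this
    exact le_trans (le_trans (le_abs_self _) this) (le_max_left _ _)
  obtain ⟨M, hM0, hMb⟩ : ∃ M : ℝ, 0 ≤ M ∧ ∀ u : Eu n, ‖u‖ = 1 → |m u| ≤ M := by
    obtain ⟨M₀, hM₀⟩ := (isCompact_sphere (0:Eu n) 1).exists_bound_of_continuousOn
      hm'.continuous.continuousOn
    refine ⟨max M₀ 0, le_max_right _ _, fun u hu => ?_⟩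
    have := hM₀ u (by simpa [mem_sphere_iff_norm] using hu)
    rw [Real.norm_eq_abs] at this
    exact le_trans this (le_max_left _ _)
  -- global homogeneity bounds
  have hglob : ∀ x : Eu n, 1 ≤ ‖x‖ → a ≤ f x ∧ f x ≤ b * ‖x‖ ∧ |m x| ≤ M := by
    intro x hx
    obtain ⟨u, hu, hmu, hfu⟩ := hkey x hx
    have h1 : a ≤ f u := hfa u hu
    have h2 : f u ≤ b := hfb u hu
    have hx0 : (0:ℝ) < ‖x‖ := lt_of_lt_of_le one_pos hx
    refine ⟨?_, ?_, by rw [hmu]; exact hMb u hu⟩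
    · rw [hfu]; nlinarith
    · rw [hfu]; nlinarith
  -- the globally smooth auxiliary function H
  set δ : ℝ := a ^ 2 with hδdef
  have hδ0 : 0 < δ := pow_pos ha0 2
  set H : ℝ × Eu n → ℝ := fun p =>
    m ((2:ℝ) • p.2) * (Real.log (p.1 ^ 2 + Stmt5Aux.chi δ (f ((2:ℝ) • p.2) ^ 2)) / 2) with hHdef
  have hsm2 : ContDiff ℝ ∞ (fun p : ℝ × Eu n => (2:ℝ) • p.2) := contDiff_snd.const_smul (2:ℝ)
  have hinner : ContDiff ℝ ∞ (fun p : ℝ × Eu n =>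
      p.1 ^ 2 + Stmt5Aux.chi δ (f ((2:ℝ) • p.2) ^ 2)) :=
    (contDiff_fst.pow 2).add ((Stmt5Aux.chi_contDiff δ).comp ((hf'.comp hsm2).pow 2))
  have hinnerpos : ∀ p : ℝ × Eu n, 0 < p.1 ^ 2 + Stmt5Aux.chi δ (f ((2:ℝ) • p.2) ^ 2) :=
    fun p => add_pos_of_nonneg_of_pos (sq_nonneg _) (Stmt5Aux.chi_pos hδ0 _)
  have hHsmooth : ContDiff ℝ ∞ H :=
    (hm'.comp hsm2).mul ((hinner.log (fun p => (hinnerpos p).ne')).div_const 2)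
  set mm2 : Eu n → ℝ := fun ξ => m ((2:ℝ) • ξ) with hmm2def
  have hmm2 : ContDiff ℝ ∞ mm2 := hm'.comp (contDiff_id.const_smul (2:ℝ))
  -- uniform derivative bounds
  have hCmj : ∀ j : ℕ, ∃ Cj : ℝ, ∀ x ∈ Metric.sphere (0:Eu n) 1, ‖iteratedFDeriv ℝ j mm2 x‖ ≤ Cj :=
    fun j => (isCompact_sphere (0:Eu n) 1).exists_bound_of_continuousOn
      ((hmm2.continuous_iteratedFDeriv (by exact_mod_cast le_top)).continuousOn)
  choose Cm' hCm' using hCmj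
  obtain ⟨Cm, hCm1, hCmle⟩ := Stmt5Aux.max_const Cm' k
  set K : Set (ℝ × Eu n) := (Set.Icc (-1:ℝ) 1) ×ˢ Metric.closedBall (0:Eu n) 1 with hKdef
  have hKcp : IsCompact K := isCompact_Icc.prod (isCompact_closedBall _ _)
  have hCHj : ∀ j : ℕ, ∃ Cj : ℝ, ∀ p ∈ K, ‖iteratedFDeriv ℝ j H p‖ ≤ Cj :=
    fun j => hKcp.exists_bound_of_continuousOn
      ((hHsmooth.continuous_iteratedFDeriv (by exact_mod_cast le_top)).continuousOn)
  choose CH' hCH' using hCHj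
  obtain ⟨CH, hCH1, hCHle⟩ := Stmt5Aux.max_const CH' k
  -- slice bound for H
  have hslice : ∀ t ∈ Set.Icc (-1:ℝ) 1, ∀ η ∈ Metric.sphere (0:Eu n) 1, ∀ j ≤ k,
      ‖iteratedFDeriv ℝ j (fun ξ => H (t, ξ)) η‖ ≤ ((Nat.factorial k : ℕ) : ℝ) * CH := by
    intro t ht η hη j hjk
    have hηb : η ∈ Metric.closedBall (0:Eu n) 1 := Metric.sphere_subset_closedBall hη
    have hcomp : (fun ξ => H (t, ξ)) = H ∘ (fun ξ : Eu n => ((t, ξ) : ℝ × Eu n)) := rfl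
    rw [hcomp]
    have hb := norm_iteratedFDeriv_comp_le (𝕜 := ℝ) hHsmooth
      (contDiff_const.prodMk contDiff_id) (by exact_mod_cast le_top) η
      (C := CH) (D := 1)
      (fun i hi => hCH' i (t, η) ⟨ht, hηb⟩ |>.trans (hCHle i (le_trans hi hjk)))
      (fun i hi1 hij => by
        rw [one_pow]
        exact Stmt5Aux.prodmk_iter_norm t η hi1)
    simp only [one_pow, mul_one] at hb
    refine le_trans hb ?_
    have hjk' : ((Nat.factorial j : ℕ) : ℝ) ≤ ((Nat.factorial k : ℕ) : ℝ) := by exact_mod_cast Nat.factorial_le hjk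
    have hCH0 : (0:ℝ) ≤ CH := by linarith
    nlinarith
  -- derivative bounds for the rescaled G
  have hGscaled : ∀ c : ℝ, 2 ≤ c → ∀ η ∈ Metric.sphere (0:Eu n) 1, ∀ j, 1 ≤ j → j ≤ k →
      ‖iteratedFDeriv ℝ j (fun ξ => G (c • ξ)) η‖ ≤
        (Cm + (Nat.factorial k : ℝ) * CH) * (1 + Real.log c) := by
    intro c hc η hη j hj1 hjk
    have hc0 : (0:ℝ) < c := by linarith
    have hcne : c ≠ 0 := hc0.ne'
    have hlogc : 0 ≤ Real.log c := Real.log_nonneg (by linarith)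
    have hη1 : ‖η‖ = 1 := by simpa [mem_sphere_iff_norm] using hη
    set t : ℝ := 2 / c with htdef
    have ht0 : 0 < t := by positivity
    have ht : t ∈ Set.Icc (-1:ℝ) 1 := by
      constructor
      · linarith
      · rw [htdef, div_le_one hc0]; linarith
    set φ : Eu n → ℝ := (Real.log (c/2) • mm2) + (fun ξ => H (t, ξ)) with hφdef
    have hφ1 : ContDiff ℝ ∞ (Real.log (c/2) • mm2) := by
      have := hmm2.const_smul (Real.log (c/2))
      exact this
    have hφ2 : ContDiff ℝ ∞ (fun ξ : Eu n => H (t, ξ)) :=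
      hHsmooth.comp (contDiff_const.prodMk contDiff_id)
    set V : Set (Eu n) := {ξ : Eu n | 1/2 < ‖ξ‖} ∩ {ξ : Eu n | ‖ξ‖ < 3/2} with hVdef
    have hVopen : IsOpen V :=
      (isOpen_lt continuous_const continuous_norm).inter
        (isOpen_lt continuous_norm continuous_const)
    have hηV : η ∈ V := by
      constructor
      · show (1:ℝ)/2 < ‖η‖; rw [hη1]; norm_num
      · show ‖η‖ < (3:ℝ)/2; rw [hη1]; norm_num
    have heqOn : Set.EqOn (fun ξ => G (c • ξ)) φ V := by
      intro ξ hξ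
      have hξ1 : (1:ℝ)/2 < ‖ξ‖ := hξ.1
      have h2ξ : (1:ℝ) ≤ ‖(2:ℝ) • ξ‖ := by
        rw [norm_smul, Real.norm_eq_abs, abs_of_pos (by norm_num : (0:ℝ) < 2)]
        linarith
      have hc2 : (1:ℝ) ≤ c/2 := by linarith
      have hcξ : c • ξ = (c/2) • ((2:ℝ) • ξ) := by
        rw [smul_smul]
        norm_num
      have hmeq : m (c • ξ) = m ((2:ℝ) • ξ) := by rw [hcξ]; exact hmhom _ h2ξ _ hc2
      have hfeq : f (c • ξ) = (c/2) * f ((2:ℝ) • ξ) := by rw [hcξ]; exact hfhom _ h2ξ _ hc2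
      have hfa2 : a ≤ f ((2:ℝ) • ξ) := (hglob _ h2ξ).1
      have hchi : Stmt5Aux.chi δ (f ((2:ℝ) • ξ) ^ 2) = f ((2:ℝ) • ξ) ^ 2 :=
        Stmt5Aux.chi_eq hδ0 (by rw [hδdef]; nlinarith)
      have hfact : 1 + (c / 2 * f ((2:ℝ) • ξ)) ^ 2
          = (c/2) ^ 2 * (t ^ 2 + f ((2:ℝ) • ξ) ^ 2) := by
        rw [htdef]; field_simp
      have hpos2 : (0:ℝ) < t ^ 2 + f ((2:ℝ) • ξ) ^ 2 := by positivity
      show G (c • ξ) = (Real.log (c/2) • mm2) ξ + H (t, ξ)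
      rw [hGc, hmeq, hfeq, hfact, Real.log_mul (by positivity) hpos2.ne', Real.log_pow]
      simp only [hHdef, hmm2def, Pi.smul_apply, smul_eq_mul, hchi]
      push_cast
      ring
    have hEv : (fun ξ => G (c • ξ)) =ᶠ[nhds η] φ :=
      Filter.eventuallyEq_of_mem (hVopen.mem_nhds hηV) heqOn
    have hiter : iteratedFDeriv ℝ j (fun ξ => G (c • ξ)) η = iteratedFDeriv ℝ j φ η := by
      rw [← iteratedFDerivWithin_univ, ← iteratedFDerivWithin_univ]
      exact Filter.EventuallyEq.iteratedFDerivWithin_eq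
        (hEv.filter_mono nhdsWithin_le_nhds) (heqOn hηV) j
    rw [hiter, hφdef, iteratedFDeriv_add_apply (hφ1.contDiffAt.of_le (by exact_mod_cast (le_top : ((j:ℕ):ℕ∞) ≤ ⊤)))
      (hφ2.contDiffAt.of_le (by exact_mod_cast (le_top : ((j:ℕ):ℕ∞) ≤ ⊤)))]
    refine le_trans (norm_add_le _ _) ?_
    have hterm1 : ‖iteratedFDeriv ℝ j (Real.log (c/2) • mm2) η‖ ≤ Cm * (1 + Real.log c) := by
      rw [iteratedFDeriv_const_smul_apply (hmm2.contDiffAt.of_le (by exact_mod_cast (le_top : ((j:ℕ):ℕ∞) ≤ ⊤))), norm_smul,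
        Real.norm_eq_abs]
      have h1 : |Real.log (c/2)| ≤ 1 + Real.log c := by
        rw [abs_of_nonneg (Real.log_nonneg (by linarith))]
        have h2 : Real.log (c/2) ≤ Real.log c := Real.log_le_log (by linarith) (by linarith)
        linarith
      have h2 : ‖iteratedFDeriv ℝ j mm2 η‖ ≤ Cm := (hCm' j η hη).trans (hCmle j hjk)
      calc |Real.log (c/2)| * ‖iteratedFDeriv ℝ j mm2 η‖ ≤ (1 + Real.log c) * Cm :=
            mul_le_mul h1 h2 (norm_nonneg _) (by linarith)
        _ = Cm * (1 + Real.log c) := mul_comm _ _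
    have hterm2 : ‖iteratedFDeriv ℝ j (fun ξ => H (t, ξ)) η‖ ≤ (Nat.factorial k : ℝ) * CH :=
      hslice t ht η hη j hjk
    have hkf0 : (0:ℝ) ≤ (Nat.factorial k : ℝ) * CH := by
      have h3 : (0:ℝ) < (Nat.factorial k : ℝ) := by exact_mod_cast Nat.factorial_pos k
      nlinarith
    have h4 : (Nat.factorial k : ℝ) * CH ≤ (Nat.factorial k : ℝ) * CH * (1 + Real.log c) :=
      le_mul_of_one_le_right hkf0 (by linarith)
    calc ‖iteratedFDeriv ℝ j (Real.log (c/2) • mm2) η‖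
          + ‖iteratedFDeriv ℝ j (fun ξ => H (t, ξ)) η‖
        ≤ Cm * (1 + Real.log c) + (Nat.factorial k : ℝ) * CH * (1 + Real.log c) := by linarith
      _ = (Cm + (Nat.factorial k : ℝ) * CH) * (1 + Real.log c) := by ring
  -- global derivative bound for G in the large region
  set CG : ℝ := Cm + (Nat.factorial k : ℝ) * CH with hCGdef
  have hkf0 : (0:ℝ) < (Nat.factorial k : ℝ) := by exact_mod_cast Nat.factorial_pos k
  have hCG1 : 1 ≤ CG := by nlinarith
  have hDG : ∀ x : Eu n, 2 ≤ ‖x‖ → ∀ j, 1 ≤ j → j ≤ k →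
      ‖iteratedFDeriv ℝ j G x‖ ≤ ‖x‖⁻¹ ^ j * (CG * (1 + Real.log ‖x‖)) := by
    intro x hx j hj1 hjk
    have hc0 : (0:ℝ) < ‖x‖ := by linarith
    have hGsc : ContDiff ℝ ∞ (fun ξ : Eu n => G (‖x‖ • ξ)) :=
      hGsmooth.comp (contDiff_id.const_smul ‖x‖)
    refine le_trans (Stmt5Aux.scale_bound G hc0 hGsc x) ?_
    refine mul_le_mul_of_nonneg_left ?_ (by positivity)
    have hηs : ‖x‖⁻¹ • x ∈ Metric.sphere (0:Eu n) 1 := by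
      have hn1 : ‖‖x‖⁻¹ • x‖ = 1 := by
        rw [norm_smul, Real.norm_eq_abs, abs_of_pos (inv_pos.2 hc0), inv_mul_cancel₀ hc0.ne']
      simpa [mem_sphere_iff_norm] using hn1
    exact hGscaled ‖x‖ hx _ hηs j hj1 hjk
  -- value bound for A in the large region
  set B : ℝ := |Real.log (2 * a / 3)| + |Real.log (1 + b ^ 2)| with hBdef
  have hB0 : 0 ≤ B := by positivity
  have hAval : ∀ x : Eu n, 2 ≤ ‖x‖ →
      Real.exp (G x) ≤ Real.exp (M * B) * (1 + ‖x‖) ^ (m x) := by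
    intro x hx
    have h1x : (1:ℝ) ≤ ‖x‖ := by linarith
    have hc0 : (0:ℝ) < ‖x‖ := by linarith
    obtain ⟨hax, hbx, hMx⟩ := hglob x h1x
    set c : ℝ := ‖x‖ with hcdef
    have hfx0 : 0 < f x := lt_of_lt_of_le ha0 hax
    have hcpos : (0:ℝ) < 1 + c := by linarith
    have h2a3 : (0:ℝ) < 2 * a / 3 := by positivity
    obtain ⟨u, hu, hmu, hfu⟩ := hkey x h1x
    have h1 : a ≤ f u := hfa u hu
    have hfca : c * a ≤ f x := by
      rw [hfu]; exact mul_le_mul_of_nonneg_left h1 hc0.le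
    have hl : (1 + c) * (2 * a / 3) ≤ f x := by nlinarith
    have hlower : ((1 + c) * (2 * a / 3)) ^ 2 ≤ 1 + f x ^ 2 := by
      nlinarith [pow_le_pow_left₀ (by positivity : (0:ℝ) ≤ (1 + c) * (2 * a / 3)) hl 2]
    have h6 : f x ^ 2 ≤ (b * c) ^ 2 := pow_le_pow_left₀ hfx0.le hbx 2
    have hupper : 1 + f x ^ 2 ≤ (1 + c) ^ 2 * (1 + b ^ 2) := by
      nlinarith [h6, mul_nonneg hc0.le (sq_nonneg b), hc0.le, sq_nonneg b, sq_nonneg c,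
        mul_nonneg (mul_nonneg hc0.le hc0.le) (sq_nonneg b)]
    have hloglow := Real.log_le_log (by positivity) hlower
    have hloghigh := Real.log_le_log (by positivity) hupper
    have e1 : Real.log (((1 + c) * (2 * a / 3)) ^ 2)
        = 2 * (Real.log (1 + c) + Real.log (2 * a / 3)) := by
      rw [Real.log_pow, Real.log_mul hcpos.ne' h2a3.ne']; push_cast; ring
    have e2 : Real.log ((1 + c) ^ 2 * (1 + b ^ 2))
        = 2 * Real.log (1 + c) + Real.log (1 + b ^ 2) := by
      rw [Real.log_mul (by positivity) (by positivity), Real.log_pow]; push_cast; ring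
    set D : ℝ := Real.log (1 + f x ^ 2) / 2 - Real.log (1 + c) with hDdef
    have hDlow : Real.log (2 * a / 3) ≤ D := by rw [hDdef]; rw [e1] at hloglow; linarith
    have hDhigh : D ≤ Real.log (1 + b ^ 2) / 2 := by rw [hDdef]; rw [e2] at hloghigh; linarith
    have hDabs : |D| ≤ B := by
      rw [hBdef, abs_le]
      constructor
      · have h7 := neg_abs_le (Real.log (2 * a / 3))
        have h8 := abs_nonneg (Real.log (1 + b ^ 2))
        linarith
      · have h9 := le_abs_self (Real.log (1 + b ^ 2))
        have h10 := abs_nonneg (Real.log (1 + b ^ 2))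
        have h11 := abs_nonneg (Real.log (2 * a / 3))
        linarith
    have hmD : m x * D ≤ M * B := by
      calc m x * D ≤ |m x * D| := le_abs_self _
        _ = |m x| * |D| := abs_mul _ _
        _ ≤ M * B := mul_le_mul hMx hDabs (abs_nonneg _) hM0
    have hrpow : (1 + c) ^ (m x) = Real.exp (Real.log (1 + c) * m x) :=
      Real.rpow_def_of_pos hcpos _
    have hGsplit : G x = m x * D + Real.log (1 + c) * m x := by
      rw [hGc x, hDdef]; ring
    rw [hGsplit, Real.exp_add, hrpow]
    exact mul_le_mul_of_nonneg_right (Real.exp_le_exp.2 hmD) (le_of_lt (Real.exp_pos _))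
  -- choice of the decay constant
  obtain ⟨K', hK'1, hK'⟩ := Stmt5Aux.log_growth hρ1
  set KK : ℝ := 2 * CG * K' with hKKdef
  have hKK1 : 1 ≤ KK := by nlinarith
  have hDfinal : ∀ x : Eu n, 2 ≤ ‖x‖ → ∀ j, 1 ≤ j → j ≤ k →
      ‖iteratedFDeriv ℝ j G x‖ ≤ (KK * (1 + ‖x‖) ^ (-ρ)) ^ j := by
    intro x hx j hj1 hjk
    have hc0 : (0:ℝ) < ‖x‖ := by linarith
    set c : ℝ := ‖x‖ with hcdef
    have hc1 : (0:ℝ) < 1 + c := by linarith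
    have hjR : (1:ℝ) ≤ (j:ℝ) := by exact_mod_cast hj1
    have hjne : j ≠ 0 := Nat.one_le_iff_ne_zero.1 hj1
    refine le_trans (hDG x hx j hj1 hjk) ?_
    have e1 : CG * (1 + Real.log c) ≤ CG * (K' * (1 + c) ^ (1 - ρ)) := by
      have h2 := hK' c (by linarith)
      nlinarith
    have e2 : c⁻¹ ≤ 2 * (1 + c)⁻¹ := by
      have h3 : (1:ℝ)/c ≤ 2/(1 + c) := by rw [div_le_div_iff₀ hc0 hc1]; linarith
      calc c⁻¹ = 1/c := (one_div c).symm
        _ ≤ 2/(1 + c) := h3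
        _ = 2 * (1 + c)⁻¹ := by rw [div_eq_mul_inv]
    calc c⁻¹ ^ j * (CG * (1 + Real.log c))
        ≤ c⁻¹ ^ j * (CG * (K' * (1 + c) ^ (1 - ρ))) :=
          mul_le_mul_of_nonneg_left e1 (by positivity)
      _ ≤ (2 * (1 + c)⁻¹) ^ j * (CG * (K' * (1 + c) ^ (1 - ρ))) := by
          refine mul_le_mul_of_nonneg_right ?_ (by positivity)
          exact pow_le_pow_left₀ (by positivity) e2 j
      _ = (2:ℝ) ^ j * (CG * K') * (((1 + c)⁻¹) ^ j * (1 + c) ^ (1 - ρ)) := by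
          rw [mul_pow]; ring
      _ = (2:ℝ) ^ j * (CG * K') * (1 + c) ^ (1 - ρ - (j:ℝ)) := by
          rw [inv_pow, ← Real.rpow_natCast (1 + c) j, ← Real.rpow_neg hc1.le,
            show (1:ℝ) - ρ - (j:ℝ) = -(j:ℝ) + (1 - ρ) by ring, Real.rpow_add hc1]
      _ ≤ KK ^ j * (1 + c) ^ (-(ρ * (j:ℝ))) := by
          have hs1 : (2:ℝ) ^ j * (CG * K') ≤ KK ^ j := by
            rw [show KK = 2 * (CG * K') by rw [hKKdef]; ring, mul_pow]
            have h4 : CG * K' ≤ (CG * K') ^ j := le_self_pow₀ (by nlinarith) hjne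
            have h5 : ((2:ℝ) ^ j) ≤ (2:ℝ) ^ j := le_rfl
            have h6 : (0:ℝ) ≤ (2:ℝ) ^ j := by positivity
            nlinarith
          have hs2 : (1 + c) ^ ((1:ℝ) - ρ - (j:ℝ)) ≤ (1 + c) ^ (-(ρ * (j:ℝ))) := by
            apply Real.rpow_le_rpow_of_exponent_le (by linarith)
            nlinarith [mul_nonneg (sub_nonneg.2 hjR) (sub_nonneg.2 hρ1.le)]
          exact mul_le_mul hs1 hs2 (by positivity) (by positivity)
      _ = (KK * (1 + c) ^ (-ρ)) ^ j := by
          have h7 : ((1 + c) ^ (-ρ)) ^ j = (1 + c) ^ (-(ρ * (j:ℝ))) := by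
            rw [← Real.rpow_natCast ((1 + c) ^ (-ρ)) j, ← Real.rpow_mul hc1.le, neg_mul]
          conv_rhs => rw [mul_pow, h7]
  -- large region bound
  set Cl : ℝ := (Nat.factorial k : ℝ) * Real.exp (M * B) * KK ^ k with hCldef
  have hCl0 : 0 < Cl := by positivity
  have hlarge : ∀ x : Eu n, 2 ≤ ‖x‖ → ‖iteratedFDeriv ℝ k A x‖ ≤
      Cl * (1 + ‖x‖) ^ (m x) * (1 + ‖x‖) ^ (-(ρ * (k:ℝ))) := by
    intro x hx
    have hc1 : (0:ℝ) < 1 + ‖x‖ := by positivity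
    have hAex : A = Real.exp ∘ G := funext hA
    have hcb := norm_iteratedFDeriv_comp_le (𝕜 := ℝ) Real.contDiff_exp hGsmooth
      (by exact_mod_cast le_top) x (C := Real.exp (G x)) (D := KK * (1 + ‖x‖) ^ (-ρ))
      (fun i _ => le_of_eq (Stmt5Aux.exp_iter_norm i (G x)))
      (fun i hi1 hik => hDfinal x hx i hi1 hik)
    rw [hAex]
    refine le_trans hcb ?_
    have hsplit : (KK * (1 + ‖x‖) ^ (-ρ)) ^ k = KK ^ k * (1 + ‖x‖) ^ (-(ρ * (k:ℝ))) := by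
      have h7 : ((1 + ‖x‖) ^ (-ρ)) ^ k = (1 + ‖x‖) ^ (-(ρ * (k:ℝ))) := by
        rw [← Real.rpow_natCast ((1 + ‖x‖) ^ (-ρ)) k, ← Real.rpow_mul hc1.le, neg_mul]
      conv_lhs => rw [mul_pow, h7]
    rw [hsplit]
    have hv := hAval x hx
    calc (Nat.factorial k : ℝ) * Real.exp (G x) * (KK ^ k * (1 + ‖x‖) ^ (-(ρ * (k:ℝ))))
        ≤ (Nat.factorial k : ℝ) * (Real.exp (M * B) * (1 + ‖x‖) ^ (m x)) *
            (KK ^ k * (1 + ‖x‖) ^ (-(ρ * (k:ℝ)))) :=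
          mul_le_mul_of_nonneg_right (mul_le_mul_of_nonneg_left hv (by positivity))
            (by positivity)
      _ = Cl * (1 + ‖x‖) ^ (m x) * (1 + ‖x‖) ^ (-(ρ * (k:ℝ))) := by rw [hCldef]; ring
  -- small region bound
  obtain ⟨C₀, hC₀⟩ := (isCompact_closedBall (0:Eu n) 2).exists_bound_of_continuousOn
    ((hAsmooth.continuous_iteratedFDeriv (by exact_mod_cast le_top)).continuousOn (s := Metric.closedBall (0:Eu n) 2))
  obtain ⟨M₀', hM₀'⟩ := (isCompact_closedBall (0:Eu n) 2).exists_bound_of_continuousOn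
    (hm'.continuous.continuousOn (s := Metric.closedBall (0:Eu n) 2))
  set M₀ : ℝ := max M₀' 0 with hM₀def
  have hM₀0 : 0 ≤ M₀ := le_max_right _ _
  set C₀' : ℝ := max C₀ 0 with hC₀'def
  have hC₀'0 : 0 ≤ C₀' := le_max_right _ _
  set Cs : ℝ := (C₀' + 1) * (3:ℝ) ^ M₀ * (3:ℝ) ^ (ρ * (k:ℝ)) with hCsdef
  have hCs0 : 0 < Cs := by positivity
  have hsmall : ∀ x : Eu n, ‖x‖ ≤ 2 → ‖iteratedFDeriv ℝ k A x‖ ≤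
      Cs * (1 + ‖x‖) ^ (m x) * (1 + ‖x‖) ^ (-(ρ * (k:ℝ))) := by
    intro x hx
    have hball : x ∈ Metric.closedBall (0:Eu n) 2 := by
      simpa [Metric.mem_closedBall, dist_zero_right] using hx
    have h1 : ‖iteratedFDeriv ℝ k A x‖ ≤ C₀' + 1 := by
      have h2 := hC₀ x hball
      have h3 : C₀ ≤ C₀' := le_max_left _ _
      calc ‖iteratedFDeriv ℝ k A x‖ = ‖‖iteratedFDeriv ℝ k A x‖‖ := (norm_norm _).symm
        _ ≤ C₀ := le_of_eq_of_le (by rw [norm_norm]) h2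
        _ ≤ C₀' + 1 := by linarith
    have hb1x : (1:ℝ) ≤ 1 + ‖x‖ := by linarith [norm_nonneg x]
    have hb3x : 1 + ‖x‖ ≤ 3 := by linarith
    have hmabs : |m x| ≤ M₀ := by
      have h4 := hM₀' x hball
      rw [Real.norm_eq_abs] at h4
      exact le_trans h4 (le_max_left _ _)
    have hr1 : (3:ℝ) ^ (-M₀) ≤ (1 + ‖x‖) ^ (m x) := Stmt5Aux.rpow_lower hb1x hb3x hmabs
    have hr2 : (3:ℝ) ^ (-(ρ * (k:ℝ))) ≤ (1 + ‖x‖) ^ (-(ρ * (k:ℝ))) := by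
      apply Stmt5Aux.rpow_lower hb1x hb3x
      rw [abs_neg, abs_of_nonneg (by positivity)]
    have hcancel : Cs * ((3:ℝ) ^ (-M₀) * (3:ℝ) ^ (-(ρ * (k:ℝ)))) = C₀' + 1 := by
      rw [hCsdef, Real.rpow_neg (by norm_num), Real.rpow_neg (by norm_num)]
      have hp1 : ((3:ℝ) ^ M₀) ≠ 0 := by positivity
      have hp2 : ((3:ℝ) ^ (ρ * (k:ℝ))) ≠ 0 := by positivity
      field_simp
    calc ‖iteratedFDeriv ℝ k A x‖ ≤ C₀' + 1 := h1
      _ = Cs * ((3:ℝ) ^ (-M₀) * (3:ℝ) ^ (-(ρ * (k:ℝ)))) := hcancel.symm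
      _ ≤ Cs * ((1 + ‖x‖) ^ (m x) * (1 + ‖x‖) ^ (-(ρ * (k:ℝ)))) := by
          refine mul_le_mul_of_nonneg_left ?_ hCs0.le
          exact mul_le_mul hr1 hr2 (by positivity) (by positivity)
      _ = Cs * (1 + ‖x‖) ^ (m x) * (1 + ‖x‖) ^ (-(ρ * (k:ℝ))) := by ring
  -- conclusion
  refine ⟨Cs + Cl, add_pos hCs0 hCl0, fun x => ?_⟩
  have hP : (0:ℝ) < (1 + ‖x‖) ^ (m x) * (1 + ‖x‖) ^ (-(ρ * (k:ℝ))) := by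
    have : (0:ℝ) < 1 + ‖x‖ := by positivity
    positivity
  rcases le_or_gt ‖x‖ 2 with hx | hx
  · calc ‖iteratedFDeriv ℝ k A x‖
        ≤ Cs * (1 + ‖x‖) ^ (m x) * (1 + ‖x‖) ^ (-(ρ * (k:ℝ))) := hsmall x hx
      _ ≤ (Cs + Cl) * (1 + ‖x‖) ^ (m x) * (1 + ‖x‖) ^ (-(ρ * (k:ℝ))) := by
          refine mul_le_mul_of_nonneg_right
            (mul_le_mul_of_nonneg_right (by linarith) (by positivity)) (by positivity)
  · calc ‖iteratedFDeriv ℝ k A x‖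
        ≤ Cl * (1 + ‖x‖) ^ (m x) * (1 + ‖x‖) ^ (-(ρ * (k:ℝ))) := hlarge x hx.le
      _ ≤ (Cs + Cl) * (1 + ‖x‖) ^ (m x) * (1 + ‖x‖) ^ (-(ρ * (k:ℝ))) := by
          refine mul_le_mul_of_nonneg_right
            (mul_le_mul_of_nonneg_right (by linarith) (by positivity)) (by positivity)
end

section
/- Let H be a complex Hilbert space with inner product ⟨·,·⟩ conjugate-linear in the first argument, and let T be a densely defined closed unbounded operator on H with domain D(T) and adjoint T† with domain D(T†). Let c ∈ ℝ and assume: Im ⟨u, T u⟩ ≤ c·‖u‖² for every u ∈ D(T), and Im ⟨v, T† v⟩ ≥ −c·‖v‖² for every v ∈ D(T†). Then for every z ∈ ℂ with Im z > c, the operator T − z is a bijection from D(T) onto H; moreover for every f ∈ H the unique u ∈ D(T) with T u − z·u = f satisfies ‖u‖ ≤ ‖f‖ / (Im z − c). In particular T has no spectrum in the half-plane { z : Im z > c }. -/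
/-!
Since Im ⟪u, (T - z) u⟫ ≤ (c - Im z) ‖u‖², Cauchy–Schwarz gives ‖(T - z) u‖ ≥ (Im z - c) ‖u‖: so
`T - z` is injective, and, `T` being closed, has closed range. A vector `v` orthogonal to that range
lies in the domain of `T†` with `T† v = conj z • v`, and the hypothesis on `T†` then forces
(Im z - c) ‖v‖² ≤ 0, i.e. `v = 0`. Hence the range is dense and closed, i.e. all of `H`.
-/

open LinearPMap

section

variable {H : Type*} [NormedAddCommGroup H] [InnerProductSpace ℂ H]

theorem mul_norm_le_norm_sub_smul_of_im_inner_le {u w : H} {z : ℂ} {c : ℝ}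
    (h : (inner ℂ u w).im ≤ c * ‖u‖ ^ 2) : (z.im - c) * ‖u‖ ≤ ‖w - z • u‖ := by
  have him : (inner ℂ u (w - z • u)).im = (inner ℂ u w).im - z.im * ‖u‖ ^ 2 := by
    rw [inner_sub_right, inner_smul_right, inner_self_eq_norm_sq_to_K]
    simp [Complex.mul_im, ← Complex.ofReal_pow]
  have hsq : (z.im - c) * ‖u‖ ^ 2 ≤ ‖u‖ * ‖w - z • u‖ :=
    calc (z.im - c) * ‖u‖ ^ 2 ≤ -(inner ℂ u (w - z • u)).im := by rw [him]; linarith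
      _ ≤ ‖inner ℂ u (w - z • u)‖ := (neg_le_abs _).trans (Complex.abs_im_le_norm _)
      _ ≤ ‖u‖ * ‖w - z • u‖ := norm_inner_le_norm _ _
  rcases (norm_nonneg u).eq_or_lt with hu | hu
  · rw [← hu, mul_zero]; exact norm_nonneg _
  · nlinarith

theorem im_inner_conj_smul_self (z : ℂ) (v : H) :
    (inner ℂ v (starRingEnd ℂ z • v)).im = -(z.im * ‖v‖ ^ 2) := by
  rw [inner_smul_right, inner_self_eq_norm_sq_to_K]
  simp [Complex.mul_im, ← Complex.ofReal_pow]

end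

namespace LinearPMap

section

variable {𝕜 E : Type*} [NontriviallyNormedField 𝕜] [NormedAddCommGroup E] [NormedSpace 𝕜 E]

def subSMul (T : E →ₗ.[𝕜] E) (z : 𝕜) : T.domain →ₗ[𝕜] E := T.toFun - z • T.domain.subtype

@[simp]
theorem subSMul_apply (T : E →ₗ.[𝕜] E) (z : 𝕜) (u : T.domain) :
    T.subSMul z u = T u - z • (u : E) := rfl

theorem isClosed_range_subSMul [CompleteSpace E] {T : E →ₗ.[𝕜] E} (hT : T.IsClosed) {z : 𝕜}
    {C : ℝ} (hC : 0 ≤ C) (hbound : ∀ u : T.domain, ‖(u : E)‖ ≤ C * ‖T.subSMul z u‖) :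
    _root_.IsClosed (Set.range (T.subSMul z)) := by
  have : CompleteSpace T.graph := hT.completeSpace_coe
  let Φ : T.graph →L[𝕜] E :=
    (ContinuousLinearMap.snd 𝕜 E E - z • ContinuousLinearMap.fst 𝕜 E E).comp T.graph.subtypeL
  have hrange : Set.range Φ = Set.range (T.subSMul z) := by
    ext w
    constructor
    · rintro ⟨⟨p, hp⟩, rfl⟩
      obtain ⟨u, hu, hTu⟩ := T.mem_graph_iff.1 hp
      exact ⟨u, by simp [Φ, ← hu, ← hTu]⟩
    · rintro ⟨u, rfl⟩
      exact ⟨⟨_, T.mem_graph u⟩, by simp [Φ]⟩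
  have hΦ : ∀ p, ‖p‖ ≤ (C + 1 + ‖z‖ * C).toNNReal * ‖Φ p‖ := by
    rintro ⟨⟨x, y⟩, hp⟩
    obtain ⟨u, rfl, rfl⟩ := T.mem_graph_iff.1 hp
    have hΦu : Φ ⟨_, hp⟩ = T.subSMul z u := by simp [Φ]
    have hu := hbound u
    have hTu : ‖T u‖ ≤ ‖T.subSMul z u‖ + ‖z‖ * ‖(u : E)‖ := by
      calc ‖T u‖ = ‖T.subSMul z u + z • (u : E)‖ := by simp
        _ ≤ _ := (norm_add_le _ _).trans (by rw [norm_smul])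
    rw [hΦu, Submodule.coe_norm, Prod.norm_def, Real.coe_toNNReal _ (by positivity)]
    have hzC : 0 ≤ ‖z‖ * C * ‖T.subSMul z u‖ := by positivity
    refine max_le ?_ ?_ <;> dsimp only <;>
      nlinarith [norm_nonneg (T.subSMul z u), mul_le_mul_of_nonneg_left hu (norm_nonneg z)]
  rw [← hrange]
  exact (Φ.antilipschitz_of_bound hΦ).isClosed_range Φ.uniformContinuous

end

section

variable {𝕜 E : Type*} [RCLike 𝕜] [NormedAddCommGroup E] [InnerProductSpace 𝕜 E]
  {T : E →ₗ.[𝕜] E} {z : 𝕜} {v : E}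

theorem inner_adjoint_eq_of_mem_orthogonal_range_subSMul
    (hv : v ∈ (LinearMap.range (T.subSMul z))ᗮ) (u : T.domain) :
    inner 𝕜 (starRingEnd 𝕜 z • v) (u : E) = inner 𝕜 v (T u) := by
  have h := (Submodule.mem_orthogonal' _ _).1 hv _ ⟨u, rfl⟩
  rw [subSMul_apply, inner_sub_right, inner_smul_right, sub_eq_zero] at h
  rw [inner_smul_left, RCLike.conj_conj, h]

theorem mem_adjoint_domain_of_mem_orthogonal_range_subSMul [CompleteSpace E]
    (hv : v ∈ (LinearMap.range (T.subSMul z))ᗮ) : v ∈ T†.domain :=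
  mem_adjoint_domain_of_exists v ⟨_, inner_adjoint_eq_of_mem_orthogonal_range_subSMul hv⟩

theorem adjoint_apply_of_mem_orthogonal_range_subSMul [CompleteSpace E]
    (hT : Dense (T.domain : Set E))
    (hv : v ∈ (LinearMap.range (T.subSMul z))ᗮ) :
    T† ⟨v, mem_adjoint_domain_of_mem_orthogonal_range_subSMul hv⟩ = starRingEnd 𝕜 z • v :=
  adjoint_apply_eq hT _ (inner_adjoint_eq_of_mem_orthogonal_range_subSMul hv)

end

end LinearPMap

theorem stmt_6 {H : Type*} [NormedAddCommGroup H] [InnerProductSpace ℂ H] [CompleteSpace H]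
    (T : H →ₗ.[ℂ] H) (hdense : Dense (T.domain : Set H)) (hclosed : T.IsClosed)
    (c : ℝ)
    (hT : ∀ u : T.domain, (inner ℂ (u : H) (T u) : ℂ).im ≤ c * ‖(u : H)‖ ^ 2)
    (hTadj : ∀ v : T.adjoint.domain,
      -(c * ‖(v : H)‖ ^ 2) ≤ (inner ℂ (v : H) (T.adjoint v) : ℂ).im) :
    ∀ z : ℂ, c < z.im →
      Function.Bijective (fun u : T.domain => T u - z • (u : H)) ∧
      ∀ u : T.domain, ‖(u : H)‖ ≤ ‖T u - z • (u : H)‖ / (z.im - c) := by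
  intro z hz
  have hε : 0 < z.im - c := sub_pos.2 hz
  have hbound (u : T.domain) : ‖(u : H)‖ ≤ ‖T.subSMul z u‖ / (z.im - c) :=
    (le_div_iff₀' hε).2 (mul_norm_le_norm_sub_smul_of_im_inner_le (hT u))
  have hinj : Function.Injective (T.subSMul z) := by
    refine (injective_iff_map_eq_zero _).2 fun u hu => ?_
    simpa [hu] using hbound u
  have hclosed_range : IsClosed (LinearMap.range (T.subSMul z) : Set H) :=
    isClosed_range_subSMul hclosed (inv_nonneg.2 hε.le) fun u => by
      simpa [inv_mul_eq_div] using hbound u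
  have horth : (LinearMap.range (T.subSMul z))ᗮ = ⊥ := by
    refine (Submodule.eq_bot_iff _).2 fun v hv => ?_
    have h := hTadj ⟨v, mem_adjoint_domain_of_mem_orthogonal_range_subSMul hv⟩
    rw [adjoint_apply_of_mem_orthogonal_range_subSMul hdense hv,
      im_inner_conj_smul_self] at h
    have : ‖v‖ ^ 2 ≤ 0 := nonpos_of_mul_nonpos_right (by linarith) hε
    simpa using this
  have : CompleteSpace (LinearMap.range (T.subSMul z)) := hclosed_range.completeSpace_coe
  have hsurj := LinearMap.range_eq_top.1 (Submodule.orthogonal_eq_bot_iff.1 horth)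
  exact ⟨⟨hinj, hsurj⟩, hbound⟩
end

section
/- Let H be a complex Hilbert space with inner product ⟨·,·⟩ conjugate-linear in the first argument, and let B : H → H be a bounded, self-adjoint, compact operator which is nonnegative (Re ⟨u, B u⟩ ≥ 0 for all u) and satisfies the trace bound: there is τ ≥ 0 such that for every finite orthonormal family (e_i)_{i ∈ F} in H one has ∑_{i ∈ F} Re ⟨e_i, B e_i⟩ ≤ τ. Then for every ε > 0 there exists a finite-dimensional subspace F ⊆ H with dim F ≤ τ / ε such that Re ⟨u, B u⟩ ≤ ε·‖u‖² for every u in the orthogonal complement of F. -/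
/-!
Take an orthonormal family `s`, of maximal size, of vectors `e` with `re ⟪e, B e⟫ > ε`. The trace
bound gives `ε · #s ≤ τ`, and `F = span s` works: a vector `u ⟂ F` with `re ⟪u, B u⟫ > ε ‖u‖²`
could be normalised and added to `s`, contradicting maximality.
-/

open Submodule RCLike
open scoped InnerProductSpace

section

variable {𝕜 E : Type*} [RCLike 𝕜] [NormedAddCommGroup E] [InnerProductSpace 𝕜 E]

theorem Orthonormal.finset_insert_of_mem_orthogonal [DecidableEq E] {s : Finset E}
    (hs : Orthonormal 𝕜 (fun x : s => (x : E))) {e : E} (he : ‖e‖ = 1)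
    (he' : e ∈ (span 𝕜 (s : Set E))ᗮ) :
    Orthonormal 𝕜 (fun x : (insert e s : Finset E) => (x : E)) := by
  have mem_span {x : E} (hx : x ∈ s) : x ∈ span 𝕜 (s : Set E) := subset_span hx
  refine ⟨?_, ?_⟩
  · rintro ⟨x, hx⟩
    obtain rfl | hxs := Finset.mem_insert.mp hx
    exacts [he, hs.1 ⟨x, hxs⟩]
  · rintro ⟨x, hx⟩ ⟨y, hy⟩ hxy
    obtain rfl | hxs := Finset.mem_insert.mp hx <;> obtain rfl | hys := Finset.mem_insert.mp hy
    · exact absurd rfl hxy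
    · exact inner_left_of_mem_orthogonal (mem_span hys) he'
    · exact inner_right_of_mem_orthogonal (mem_span hxs) he'
    · exact hs.2 (i := ⟨x, hxs⟩) (j := ⟨y, hys⟩) fun h => hxy (Subtype.ext (Subtype.mk.inj h))

theorem re_inner_smul_apply_smul (B : E →ₗ[𝕜] E) (c : 𝕜) (u : E) :
    re ⟪c • u, B (c • u)⟫_𝕜 = ‖c‖ ^ 2 * re ⟪u, B u⟫_𝕜 := by
  rw [map_smul, inner_smul_left, inner_smul_right, ← mul_assoc, RCLike.conj_mul, ← ofReal_pow,
    re_ofReal_mul]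

theorem re_inner_apply_le_of_card_maximal (B : E →ₗ[𝕜] E) {ε : ℝ} {s : Finset E}
    (hs : Orthonormal 𝕜 (fun x : s => (x : E))) (hsε : ∀ e ∈ s, ε < re ⟪e, B e⟫_𝕜)
    (hmax : ∀ t : Finset E, Orthonormal 𝕜 (fun x : t => (x : E)) →
      (∀ e ∈ t, ε < re ⟪e, B e⟫_𝕜) → t.card ≤ s.card)
    {u : E} (hu : u ∈ (span 𝕜 (s : Set E))ᗮ) :
    re ⟪u, B u⟫_𝕜 ≤ ε * ‖u‖ ^ 2 := by
  classical
  by_contra! hlt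
  have hu0 : u ≠ 0 := by rintro rfl; simp at hlt
  set e : E := (‖u‖⁻¹ : 𝕜) • u
  have he : ‖e‖ = 1 := norm_smul_inv_norm hu0
  have he' : e ∈ (span 𝕜 (s : Set E))ᗮ := smul_mem _ _ hu
  have heε : ε < re ⟪e, B e⟫_𝕜 := by
    rw [re_inner_smul_apply_smul, norm_inv, norm_ofReal, abs_norm, inv_pow,
      lt_inv_mul_iff₀ (by positivity), mul_comm]
    exact hlt
  have hes : e ∉ s := fun hes => by
    simpa [he] using inner_left_of_mem_orthogonal (subset_span hes) he'
  have := hmax (insert e s) (hs.finset_insert_of_mem_orthogonal he he') <| by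
    simpa only [Finset.forall_mem_insert] using ⟨heε, hsε⟩
  rw [Finset.card_insert_of_notMem hes] at this
  omega

end

theorem stmt_11_general {H : Type*} [NormedAddCommGroup H] [InnerProductSpace ℂ H]
    (B : H →L[ℂ] H)
    (τ : ℝ)
    (htr : ∀ s : Finset H, Orthonormal ℂ (fun x : s => (x : H)) →
      ∑ e ∈ s, (inner ℂ (e : H) (B e) : ℂ).re ≤ τ) :
    ∀ ε > 0, ∃ F : Submodule ℂ H, FiniteDimensional ℂ F ∧
      (Module.finrank ℂ F : ℝ) ≤ τ / ε ∧
      ∀ u ∈ Fᗮ, (inner ℂ u (B u) : ℂ).re ≤ ε * ‖u‖ ^ 2 := by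
  intro ε hε
  set T : Set (Finset H) := {s | Orthonormal ℂ (fun x : s => (x : H)) ∧
    ∀ e ∈ s, ε < (inner ℂ (e : H) (B e) : ℂ).re}
  have hcard : ∀ s ∈ T, (s.card : ℝ) ≤ τ / ε := fun s hs => by
    rw [le_div_iff₀ hε, ← nsmul_eq_mul]
    exact (s.card_nsmul_le_sum _ ε fun e he => (hs.2 e he).le).trans (htr s hs.1)
  have hT : (∅ : Finset H) ∈ T :=
    ⟨⟨fun x => (Finset.notMem_empty _ x.2).elim, fun x => (Finset.notMem_empty _ x.2).elim⟩,
      fun _ h => (Finset.notMem_empty _ h).elim⟩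
  obtain ⟨_, ⟨s, hs, rfl⟩, hmax⟩ := BddAbove.exists_isGreatest_of_nonempty
    (S := Finset.card '' T) ⟨⌊τ / ε⌋₊, by rintro _ ⟨t, ht, rfl⟩; exact Nat.le_floor (hcard t ht)⟩
    ⟨_, _, hT, rfl⟩
  refine ⟨span ℂ s, inferInstance, ?_, fun u hu => re_inner_apply_le_of_card_maximal
    B.toLinearMap hs.1 hs.2 (fun t ht htε => hmax ⟨t, ⟨ht, htε⟩, rfl⟩) hu⟩
  rw [finrank_span_finset_eq_card hs.1.linearIndependent]
  exact hcard s hs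

theorem stmt_11 {H : Type*} [NormedAddCommGroup H] [InnerProductSpace ℂ H] [CompleteSpace H]
    (B : H →L[ℂ] H) (hcpt : IsCompactOperator B)
    (hsa : ∀ u v : H, (inner ℂ u (B v) : ℂ) = inner ℂ (B u) v)
    (hpos : ∀ u : H, 0 ≤ (inner ℂ u (B u) : ℂ).re)
    (τ : ℝ) (hτ : 0 ≤ τ)
    (htr : ∀ s : Finset H, Orthonormal ℂ (fun x : s => (x : H)) →
      ∑ e ∈ s, (inner ℂ (e : H) (B e) : ℂ).re ≤ τ) :
    ∀ ε > 0, ∃ F : Submodule ℂ H, FiniteDimensional ℂ F ∧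
      (Module.finrank ℂ F : ℝ) ≤ τ / ε ∧
      ∀ u ∈ Fᗮ, (inner ℂ u (B u) : ℂ).re ≤ ε * ‖u‖ ^ 2 :=
  stmt_11_general B τ htr
end

section
/- Let H be a complex Hilbert space with inner product ⟨·,·⟩ conjugate-linear in the first argument, D ⊆ H a subspace, and L : D → H a linear map. Let B : H → H be a bounded, self-adjoint, nonnegative, compact operator satisfying the trace bound: for every finite orthonormal family (e_i)_{i ∈ F} in H, ∑_{i ∈ F} Re ⟨e_i, B e_i⟩ ≤ τ. Let h > 0 and λ ∈ ℝ, and assume the quadratic-form lower bound ‖L u‖² + h · Re ⟨u, B u⟩ ≥ (1 + 2λh) ‖u‖² for every u ∈ D. Then for every ε > 0 there exists a finite-dimensional subspace F ⊆ H with dim F ≤ τ / ε such that ‖L u‖² ≥ (1 + 2λh − εh) ‖u‖² for every u ∈ D lying in the orthogonal complement of F. -/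
/-!
Take an orthonormal family `e₁, …, eₙ` with `re ⟪eᵢ, B eᵢ⟫ > ε` of maximal size; the trace bound
gives `n ε ≤ τ`. On the orthogonal complement `F` of its span, `re ⟪u, B u⟫ ≤ ε ‖u‖²`, since
otherwise `u / ‖u‖` would enlarge the family. Feeding this into the lower bound for `‖L u‖²`
gives the claim.
-/

open Module RCLike Submodule
open scoped InnerProductSpace

section
variable {𝕜 E : Type*} [RCLike 𝕜] [NormedAddCommGroup E] [InnerProductSpace 𝕜 E]

theorem notMem_of_mem_orthogonal_span {s : Set E} {w : E} (hw : w ≠ 0) (hws : w ∈ (span 𝕜 s)ᗮ) :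
    w ∉ s :=
  fun h => hw (disjoint_def.1 (span 𝕜 s).orthogonal_disjoint w (subset_span h) hws)

theorem orthonormal_insert_of_mem_orthogonal {s : Set E} (hs : Orthonormal 𝕜 ((↑) : s → E))
    {w : E} (hw : ‖w‖ = 1) (hws : w ∈ (span 𝕜 s)ᗮ) :
    Orthonormal 𝕜 ((↑) : ↥(insert w s) → E) := by
  classical
  have hperp (v : E) (hv : v ∈ s) : ⟪v, w⟫_𝕜 = 0 := (mem_orthogonal _ _).1 hws v (subset_span hv)
  have hwns : w ∉ s := notMem_of_mem_orthogonal_span (norm_ne_zero_iff.1 (by simp [hw])) hws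
  rw [orthonormal_subtype_iff_ite] at hs ⊢
  rintro v (rfl | hv) x (rfl | hx)
  · simp [inner_self_eq_norm_sq_to_K, hw]
  · rw [if_neg (ne_of_mem_of_not_mem hx hwns).symm, ← inner_conj_symm, hperp x hx, map_zero]
  · rw [if_neg (ne_of_mem_of_not_mem hv hwns), hperp v hv]
  · exact hs v hv x hx

theorem re_inner_smul_map_smul (T : E →ₗ[𝕜] E) (c : 𝕜) (u : E) :
    re ⟪c • u, T (c • u)⟫_𝕜 = ‖c‖ ^ 2 * re ⟪u, T u⟫_𝕜 := by
  rw [map_smul, inner_smul_left, inner_smul_right, ← mul_assoc, RCLike.conj_mul, ← ofReal_pow,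
    re_ofReal_mul]

variable (T : E →ₗ[𝕜] E) {ε : ℝ}

theorem exists_orthonormal_card_lt_of_lt_re_inner {s : Finset E}
    (hs : Orthonormal 𝕜 (fun x : s => (x : E))) (hgt : ∀ e ∈ s, ε < re ⟪e, T e⟫_𝕜)
    {u : E} (hu : u ∈ (span 𝕜 (s : Set E))ᗮ) (hlt : ε * ‖u‖ ^ 2 < re ⟪u, T u⟫_𝕜) :
    ∃ t : Finset E, s.card < t.card ∧ Orthonormal 𝕜 (fun x : t => (x : E)) ∧
      ∀ e ∈ t, ε < re ⟪e, T e⟫_𝕜 := by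
  classical
  have hu0 : u ≠ 0 := by rintro rfl; simp at hlt
  set w : E := (‖u‖⁻¹ : 𝕜) • u
  have hw : ‖w‖ = 1 := by simp [w, norm_smul, hu0]
  have hws : w ∈ (span 𝕜 (s : Set E))ᗮ := smul_mem _ _ hu
  have hon := orthonormal_insert_of_mem_orthogonal hs hw hws
  rw [← Finset.coe_insert] at hon
  have hwns : w ∉ s := notMem_of_mem_orthogonal_span (by simpa [w] using hu0) hws
  refine ⟨insert w s, Finset.card_lt_card (Finset.ssubset_insert hwns), hon, ?_⟩
  rintro e he
  rcases Finset.mem_insert.1 he with rfl | he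
  · have hnorm : 0 < ‖u‖ := norm_pos_iff.2 hu0
    rw [re_inner_smul_map_smul, norm_inv, norm_ofReal, abs_norm, inv_pow, ← div_eq_inv_mul]
    exact (lt_div_iff₀ (by positivity)).2 hlt
  · exact hgt e he

theorem exists_finrank_le_div_forall_mem_orthogonal_re_inner_le {τ : ℝ} (hε : 0 < ε)
    (htr : ∀ s : Finset E, Orthonormal 𝕜 (fun x : s => (x : E)) → ∑ e ∈ s, re ⟪e, T e⟫_𝕜 ≤ τ) :
    ∃ F : Submodule 𝕜 E, FiniteDimensional 𝕜 F ∧ (finrank 𝕜 F : ℝ) ≤ τ / ε ∧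
      ∀ u ∈ Fᗮ, re ⟪u, T u⟫_𝕜 ≤ ε * ‖u‖ ^ 2 := by
  set S : Set (Finset E) :=
    {s | Orthonormal 𝕜 (fun x : s => (x : E)) ∧ ∀ e ∈ s, ε < re ⟪e, T e⟫_𝕜}
  have hcard (s : Finset E) (hs : s ∈ S) : (s.card : ℝ) ≤ τ / ε := by
    rw [le_div_iff₀ hε]
    calc s.card * ε ≤ ∑ e ∈ s, re ⟪e, T e⟫_𝕜 := by
          simpa using Finset.card_nsmul_le_sum s _ ε fun e he => (hs.2 e he).le
      _ ≤ τ := htr s hs.1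
  have hempty : ∅ ∈ S := ⟨Orthonormal.of_isEmpty _, by simp⟩
  have hbdd : BddAbove (Finset.card '' S) :=
    ⟨⌊τ / ε⌋₊, by rintro _ ⟨s, hs, rfl⟩; exact Nat.le_floor (hcard s hs)⟩
  obtain ⟨s, hs, hs_card⟩ := Nat.sSup_mem (Set.Nonempty.image _ ⟨∅, hempty⟩) hbdd
  refine ⟨span 𝕜 s, FiniteDimensional.span_finset 𝕜 s, ?_, fun u hu => ?_⟩
  · rw [finrank_span_finset_eq_card hs.1.linearIndependent]
    exact hcard s hs
  · by_contra! hlt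
    obtain ⟨t, hst, ht⟩ := exists_orthonormal_card_lt_of_lt_re_inner T hs.1 hs.2 hu hlt
    exact hst.not_ge (hs_card ▸ le_csSup hbdd ⟨t, ht, rfl⟩)
end

theorem stmt_12_general {H : Type*} [NormedAddCommGroup H] [InnerProductSpace ℂ H]
    (D : Submodule ℂ H) (L : D →ₗ[ℂ] H)
    (B : H →L[ℂ] H)
    (τ : ℝ)
    (htr : ∀ s : Finset H, Orthonormal ℂ (fun x : s => (x : H)) →
      ∑ e ∈ s, (inner ℂ (e : H) (B e) : ℂ).re ≤ τ)
    (h lam : ℝ) (hh : 0 < h)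
    (hlow : ∀ u : D,
      (1 + 2 * lam * h) * ‖(u : H)‖ ^ 2 ≤ ‖L u‖ ^ 2 + h * (inner ℂ (u : H) (B (u : H)) : ℂ).re) :
    ∀ ε > 0, ∃ F : Submodule ℂ H, FiniteDimensional ℂ F ∧
      (Module.finrank ℂ F : ℝ) ≤ τ / ε ∧
      ∀ u : D, (u : H) ∈ Fᗮ → (1 + 2 * lam * h - ε * h) * ‖(u : H)‖ ^ 2 ≤ ‖L u‖ ^ 2 := by
  intro ε hε
  obtain ⟨F, hF, hdim, hsmall⟩ :=
    exists_finrank_le_div_forall_mem_orthogonal_re_inner_le (B : H →ₗ[ℂ] H) hε htr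
  refine ⟨F, hF, hdim, fun u hu => ?_⟩
  have hBu : (inner ℂ (u : H) (B (u : H)) : ℂ).re ≤ ε * ‖(u : H)‖ ^ 2 := hsmall u hu
  nlinarith [hlow u]

theorem stmt_12 {H : Type*} [NormedAddCommGroup H] [InnerProductSpace ℂ H] [CompleteSpace H]
    (D : Submodule ℂ H) (L : D →ₗ[ℂ] H)
    (B : H →L[ℂ] H) (hcpt : IsCompactOperator B)
    (hsa : ∀ u v : H, (inner ℂ u (B v) : ℂ) = inner ℂ (B u) v)
    (hpos : ∀ u : H, 0 ≤ (inner ℂ u (B u) : ℂ).re)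
    (τ : ℝ)
    (htr : ∀ s : Finset H, Orthonormal ℂ (fun x : s => (x : H)) →
      ∑ e ∈ s, (inner ℂ (e : H) (B e) : ℂ).re ≤ τ)
    (h lam : ℝ) (hh : 0 < h)
    (hlow : ∀ u : D,
      (1 + 2 * lam * h) * ‖(u : H)‖ ^ 2 ≤ ‖L u‖ ^ 2 + h * (inner ℂ (u : H) (B (u : H)) : ℂ).re) :
    ∀ ε > 0, ∃ F : Submodule ℂ H, FiniteDimensional ℂ F ∧
      (Module.finrank ℂ F : ℝ) ≤ τ / ε ∧
      ∀ u : D, (u : H) ∈ Fᗮ → (1 + 2 * lam * h - ε * h) * ‖(u : H)‖ ^ 2 ≤ ‖L u‖ ^ 2 :=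
  stmt_12_general D L B τ htr h lam hh hlow
end
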